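/- arXiv:1902.03504 — 10 statements merged into one kernel-verified Lean document; each statement's English description precedes it below -/
import Mathlib

section
/- Let β, μ, b, K be positive reals with K > 1, and set a = ((K−1)β + b)/μ and c = (K−1)β/μ, and suppose β = μ c^a e^(−c) / γ(a,c), where γ is the lower incomplete Gamma function. Then the function G(z) = e^(c(z−1)) z^(−a) γ(a, zc)/γ(a,c) satisfies the ODE β − μ z G'(z) + (β(K−1)(z−1) − b) G(z) = 0 on (0,1], together with G(1) = 1. -/
/-! With `F(z) = e^(c(z−1)) z^(−a) γ(a, zc)`, the fundamental theorem of calculus gives the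
first-order linear ODE `z F'(z) = (cz − a) F(z) + c^a e^(−c)`, since the `γ'` term collapses to
`e^(c(z−1)) z^(−a) (zc)^(a−1) e^(−zc) c = c^a e^(−c) / z`. Dividing by `γ(a, c)`, the constant
becomes `β/μ` by the fixed-point relation, and `μc`, `μa` are read off from the parameters. -/

open Real

noncomputable def lowerGamma (a z : ℝ) : ℝ := ∫ t in (0:ℝ)..z, t ^ (a - 1) * Real.exp (-t)

theorem hasDerivAt_lowerGamma {a x : ℝ} (ha : 0 < a) (hx : 0 < x) :
    HasDerivAt (lowerGamma a) (x ^ (a - 1) * exp (-x)) x := by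
  have hcont : ContinuousAt (fun t : ℝ => t ^ (a - 1) * exp (-t)) x :=
    (continuousAt_rpow_const x (a - 1) (Or.inl hx.ne')).mul (by fun_prop)
  refine intervalIntegral.integral_hasDerivAt_right ?_ ?_ hcont
  · exact (intervalIntegral.intervalIntegrable_rpow' (by linarith)).mul_continuousOn
      (by fun_prop)
  · exact ⟨Set.univ, Filter.univ_mem,
      (by fun_prop : Measurable fun t : ℝ => t ^ (a - 1) * exp (-t)).aestronglyMeasurable⟩

theorem mul_rpow_neg_mul_mul_rpow_sub_one_mul {z c : ℝ} (hz : 0 < z) (hc : 0 < c) (a : ℝ) :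
    z * (z ^ (-a) * ((z * c) ^ (a - 1) * c)) = c ^ a := by
  rw [rpow_sub_one (mul_pos hz hc).ne', mul_rpow hz.le hc.le, rpow_neg hz.le]
  field_simp [(rpow_pos_of_pos hz a).ne']

theorem hasDerivAt_exp_mul_rpow_neg_mul_lowerGamma {a c z : ℝ} (ha : 0 < a) (hc : 0 < c)
    (hz : 0 < z) :
    HasDerivAt (fun z => exp (c * (z - 1)) * z ^ (-a) * lowerGamma a (z * c))
      (((c * z - a) * (exp (c * (z - 1)) * z ^ (-a) * lowerGamma a (z * c))
        + c ^ a * exp (-c)) / z) z := by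
  have hexp : HasDerivAt (fun z : ℝ => exp (c * (z - 1))) (exp (c * (z - 1)) * c) z := by
    simpa using (((hasDerivAt_id z).sub_const 1).const_mul c).exp
  have hpow : HasDerivAt (fun z : ℝ => z ^ (-a)) (-a * z ^ (-a - 1)) z :=
    hasDerivAt_rpow_const (Or.inl hz.ne')
  have hgamma : HasDerivAt (fun z : ℝ => lowerGamma a (z * c))
      ((z * c) ^ (a - 1) * exp (-(z * c)) * c) z :=
    (hasDerivAt_lowerGamma ha (mul_pos hz hc)).comp (h := fun z => z * c) z
      (hasDerivAt_mul_const c)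
  refine ((hexp.mul hpow).mul hgamma).congr_deriv ?_
  have hpow_succ : z * z ^ (-a - 1) = z ^ (-a) := by
    rw [rpow_sub_one hz.ne']; field_simp
  have hexp_mul : exp (c * (z - 1)) * exp (-(z * c)) = exp (-c) := by
    rw [← exp_add]; ring_nf
  have hcollapse := mul_rpow_neg_mul_mul_rpow_sub_one_mul hz hc a
  rw [eq_div_iff hz.ne']
  simp only [Pi.mul_apply]
  linear_combination (-a * exp (c * (z - 1)) * lowerGamma a (z * c)) * hpow_succ
    + exp (c * (z - 1)) * exp (-(z * c)) * hcollapse + c ^ a * hexp_mul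

/-- If `β = μ c^a e^(−c)/γ(a,c)` with `a = ((K−1)β+b)/μ`, `c = (K−1)β/μ`, then
`G(z) = e^(c(z−1)) z^(−a) γ(a, zc)/γ(a,c)` satisfies
`β − μ z G'(z) + (β(K−1)(z−1) − b) G(z) = 0` on `(0,1]`, and `G(1) = 1`. -/
theorem stmt4 (β μ b K : ℝ) (hβ : 0 < β) (hμ : 0 < μ) (hb : 0 < b) (hK : 1 < K)
    (a c : ℝ) (ha : a = ((K - 1) * β + b) / μ) (hc : c = (K - 1) * β / μ)
    (hfix : β = μ * c ^ a * Real.exp (-c) / lowerGamma a c) :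
    let G : ℝ → ℝ := fun z =>
      Real.exp (c * (z - 1)) * z ^ (-a) * lowerGamma a (z * c) / lowerGamma a c
    (∀ z ∈ Set.Ioc (0:ℝ) 1,
      β - μ * z * deriv G z + (β * (K - 1) * (z - 1) - b) * G z = 0) ∧ G 1 = 1 := by
  intro G
  have hγ : lowerGamma a c ≠ 0 := by
    rintro h
    rw [h, div_zero] at hfix
    exact hβ.ne' hfix
  have hc0 : 0 < c := hc ▸ div_pos (mul_pos (sub_pos.2 hK) hβ) hμ
  have ha0 : 0 < a := ha ▸ div_pos (by nlinarith) hμ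
  have hμc : μ * c = (K - 1) * β := by rw [hc]; field_simp
  have hμa : μ * a = (K - 1) * β + b := by rw [ha]; field_simp
  have hβγ : β * lowerGamma a c = μ * c ^ a * exp (-c) := by rw [hfix]; field_simp
  refine ⟨fun z hz => ?_, by simp [G, hγ]⟩
  rw [((hasDerivAt_exp_mul_rpow_neg_mul_lowerGamma ha0 hc0 hz.1).div_const _).deriv]
  have hz0 : z ≠ 0 := hz.1.ne'
  set F := exp (c * (z - 1)) * z ^ (-a) * lowerGamma a (z * c)
  simp only [G]
  field_simp
  linear_combination hβγ - z * F * hμc + F * hμa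
end

section
/- Let a > 0 and c > 0. The sequence p(n) = (c^a e^(−c)/γ(a,c)) · c^n / (a(a+1)⋯(a+n)) for n ≥ 0 defines a probability distribution on the nonnegative integers, i.e., p(n) ≥ 0 for all n and Σ_{n=0}^∞ p(n) = 1. -/
open Real Filter Topology Finset
open scoped Nat

theorem lowerGamma_eq_partialGamma (a : ℝ) {c : ℝ} (hc : 0 ≤ c) :
    (lowerGamma a c : ℂ) = Complex.partialGamma a c := by
  rw [lowerGamma, Complex.partialGamma, ← intervalIntegral.integral_ofReal]
  refine intervalIntegral.integral_congr fun t ht => ?_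
  rw [Set.uIcc_of_le hc] at ht
  push_cast
  rw [Complex.ofReal_cpow ht.1]
  push_cast
  ring

theorem lowerGamma_add_one {a c : ℝ} (ha : 0 < a) (hc : 0 ≤ c) :
    lowerGamma (a + 1) c = a * lowerGamma a c - exp (-c) * c ^ a := by
  have h := Complex.partialGamma_add_one (s := a) (by simpa using ha) hc
  rw [← Complex.ofReal_one, ← Complex.ofReal_add, ← lowerGamma_eq_partialGamma _ hc,
    ← lowerGamma_eq_partialGamma _ hc, ← Complex.ofReal_cpow hc] at h
  exact_mod_cast h

theorem intervalIntegrable_rpow_sub_one_mul_exp_neg {a c : ℝ} (ha : 0 < a) (hc : 0 ≤ c) :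
    IntervalIntegrable (fun t : ℝ => t ^ (a - 1) * exp (-t)) MeasureTheory.volume 0 c := by
  rw [intervalIntegrable_iff_integrableOn_Ioc_of_le hc]
  exact ((GammaIntegral_convergent ha).mono_set Set.Ioc_subset_Ioi_self).congr_fun
    (fun _ _ => mul_comm _ _) measurableSet_Ioc

theorem lowerGamma_nonneg (a : ℝ) {c : ℝ} (hc : 0 ≤ c) : 0 ≤ lowerGamma a c :=
  intervalIntegral.integral_nonneg hc fun t ht => by have := ht.1; positivity

theorem lowerGamma_pos {a c : ℝ} (ha : 0 < a) (hc : 0 < c) : 0 < lowerGamma a c :=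
  intervalIntegral.intervalIntegral_pos_of_pos_on
    (intervalIntegrable_rpow_sub_one_mul_exp_neg ha hc.le)
    (fun t ht => by have := ht.1; positivity) hc

theorem lowerGamma_le_rpow_div {a c : ℝ} (ha : 0 < a) (hc : 0 ≤ c) :
    lowerGamma a c ≤ c ^ a / a := by
  have h : lowerGamma a c ≤ ∫ t in (0:ℝ)..c, t ^ (a - 1) := by
    refine intervalIntegral.integral_mono_on hc (intervalIntegrable_rpow_sub_one_mul_exp_neg ha hc)
      (intervalIntegral.intervalIntegrable_rpow' (by linarith)) fun t ht => ?_
    have ht0 := ht.1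
    exact mul_le_of_le_one_right (by positivity) (exp_le_one_iff.mpr (by linarith))
  rwa [integral_rpow (Or.inl (by linarith)), sub_add_cancel, zero_rpow ha.ne', sub_zero] at h

theorem mul_factorial_le_prod_range_add {a : ℝ} (ha : 0 ≤ a) (n : ℕ) :
    a * n ! ≤ ∏ m ∈ range (n + 1), (a + m) := by
  rw [prod_range_succ', ← prod_range_add_one_eq_factorial, Nat.cast_prod, mul_comm, Nat.cast_zero,
    add_zero]
  gcongr with m
  push_cast
  linarith

theorem lowerGamma_eq_sum_add {a c : ℝ} (ha : 0 < a) (hc : 0 ≤ c) (N : ℕ) :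
    lowerGamma a c = exp (-c) * ∑ n ∈ range N, c ^ (a + n) / ∏ m ∈ range (n + 1), (a + m)
      + lowerGamma (a + N) c / ∏ m ∈ range N, (a + m) := by
  induction N with
  | zero => simp
  | succ N ih =>
    have hrec := lowerGamma_add_one (a := a + N) (by positivity) hc
    have hP : 0 < ∏ m ∈ range N, (a + m) := prod_pos fun m _ => by positivity
    have haN : 0 < a + N := by positivity
    rw [add_assoc, ← Nat.cast_add_one] at hrec
    rw [ih, sum_range_succ, prod_range_succ, hrec]
    field_simp
    ring

theorem tendsto_lowerGamma_add_div_prod {a c : ℝ} (ha : 0 < a) (hc : 0 ≤ c) :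
    Tendsto (fun N : ℕ => lowerGamma (a + N) c / ∏ m ∈ range N, (a + m)) atTop (𝓝 0) := by
  have hlim : Tendsto (fun N : ℕ => c ^ a / a * (c ^ N / N !)) atTop (𝓝 0) := by
    simpa using (FloorSemiring.tendsto_pow_div_factorial_atTop c).const_mul (c ^ a / a)
  refine squeeze_zero (fun N => div_nonneg (lowerGamma_nonneg _ hc) ?_) (fun N => ?_) hlim
  · exact prod_nonneg fun m _ => by positivity
  have hP : 0 < ∏ m ∈ range N, (a + m) := prod_pos fun m _ => by positivity
  calc lowerGamma (a + N) c / ∏ m ∈ range N, (a + m)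
      ≤ c ^ (a + N) / (a + N) / ∏ m ∈ range N, (a + m) := by
        gcongr; exact lowerGamma_le_rpow_div (by positivity) hc
    _ = c ^ a * c ^ N / ∏ m ∈ range (N + 1), (a + m) := by
        rw [rpow_add' hc (by positivity), rpow_natCast, prod_range_succ, div_div,
          mul_comm (a + N)]
    _ ≤ c ^ a * c ^ N / (a * N !) := by
        gcongr; exact mul_factorial_le_prod_range_add ha.le N
    _ = c ^ a / a * (c ^ N / N !) := by ring

theorem hasSum_rpow_div_prod_range_add {a c : ℝ} (ha : 0 < a) (hc : 0 ≤ c) :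
    HasSum (fun n : ℕ => c ^ (a + n) / ∏ m ∈ range (n + 1), (a + m))
      (exp c * lowerGamma a c) := by
  rw [hasSum_iff_tendsto_nat_of_nonneg fun n => by positivity]
  have hpartial (N : ℕ) : ∑ n ∈ range N, c ^ (a + n) / ∏ m ∈ range (n + 1), (a + m)
      = exp c * (lowerGamma a c - lowerGamma (a + N) c / ∏ m ∈ range N, (a + m)) := by
    rw [lowerGamma_eq_sum_add ha hc N, add_sub_cancel_right, ← mul_assoc, ← exp_add,
      add_neg_cancel, exp_zero, one_mul]
  simp only [hpartial]
  simpa using ((tendsto_lowerGamma_add_div_prod ha hc).const_sub (lowerGamma a c)).const_mul (exp c)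

/-- For `a > 0`, `c > 0`, the sequence
`p(n) = (c^a e^(−c)/γ(a,c)) · c^n / (a(a+1)⋯(a+n))` is a probability distribution on ℕ. -/
theorem stmt5 (a c : ℝ) (ha : 0 < a) (hc : 0 < c) :
    let p : ℕ → ℝ := fun n =>
      (c ^ a * Real.exp (-c) / lowerGamma a c) * c ^ n / ∏ m ∈ Finset.range (n + 1), (a + m)
    (∀ n, 0 ≤ p n) ∧ ∑' n, p n = 1 := by
  intro p
  have hγ : 0 < lowerGamma a c := lowerGamma_pos ha hc
  have hp : p = fun n : ℕ =>
      exp (-c) / lowerGamma a c * (c ^ (a + n) / ∏ m ∈ range (n + 1), (a + m)) := by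
    ext n
    simp only [p, rpow_add hc, rpow_natCast]
    ring
  refine ⟨fun n => ?_, ?_⟩
  · rw [hp]; positivity
  · rw [hp, ((hasSum_rpow_div_prod_range_add ha hc.le).mul_left _).tsum_eq]
    field_simp
    rw [← exp_add, neg_add_cancel, exp_zero]
end

section
/- Let τ > 0 and let f, g : ℝ → ℝ be C^∞ with f(−τ) > 0. Any two continuous solutions on ℝ of the ODE (1 + u/τ) L'(u) + f(u) L(u) − g(u) = 0 (required to be differentiable and satisfy the ODE on ℝ \ {−τ}) coincide; in particular, the ODE has at most one continuous solution on ℝ. -/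
open Real Set

private lemma gron_zero {D k : ℝ → ℝ} {a T : ℝ}
    (hc : ContinuousOn D (Set.Icc a T))
    (hd : ∀ t ∈ Set.Ico a T, HasDerivAt D (k t * D t) t)
    {C : ℝ} (hk : ∀ t ∈ Set.Ico a T, |k t| ≤ C)
    (ha : D a = 0) : ∀ t ∈ Set.Icc a T, D t = 0 := by
  intro t ht
  have h := norm_le_gronwallBound_of_norm_deriv_right_le (f' := fun t => k t * D t)
    (δ := 0) (K := C) (ε := 0) hc (fun s hs => (hd s hs).hasDerivWithinAt)
    (by simp [ha]) (fun s hs => by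
      rw [Real.norm_eq_abs, Real.norm_eq_abs, abs_mul, add_zero]
      exact mul_le_mul_of_nonneg_right (hk s hs) (abs_nonneg _)) t ht
  rw [gronwallBound_ε0_δ0] at h
  exact norm_eq_zero.mp (le_antisymm h (norm_nonneg _))

/-- Uniqueness of continuous solutions on ℝ of `(1 + u/τ) L'(u) + f(u) L(u) − g(u) = 0`
(differentiable and satisfying the ODE away from `−τ`), when `f(−τ) > 0`. -/
theorem stmt9 (τ : ℝ) (hτ : 0 < τ) (f g : ℝ → ℝ)
    (hf : ContDiff ℝ (⊤ : ℕ∞) f) (hg : ContDiff ℝ (⊤ : ℕ∞) g) (hfτ : 0 < f (-τ))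
    (L₁ L₂ : ℝ → ℝ) (hL₁c : Continuous L₁) (hL₂c : Continuous L₂)
    (hL₁d : ∀ u : ℝ, u ≠ -τ → DifferentiableAt ℝ L₁ u)
    (hL₂d : ∀ u : ℝ, u ≠ -τ → DifferentiableAt ℝ L₂ u)
    (hL₁ : ∀ u : ℝ, u ≠ -τ → (1 + u / τ) * deriv L₁ u + f u * L₁ u - g u = 0)
    (hL₂ : ∀ u : ℝ, u ≠ -τ → (1 + u / τ) * deriv L₂ u + f u * L₂ u - g u = 0) :
    L₁ = L₂ := by
  have hτ' : τ ≠ 0 := ne_of_gt hτ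
  set D : ℝ → ℝ := fun u => L₁ u - L₂ u with hDdef
  have hDc : Continuous D := hL₁c.sub hL₂c
  set k : ℝ → ℝ := fun u => -τ * f u / (u + τ) with hkdef
  -- D satisfies D' = k * D away from -τ
  have hder : ∀ u : ℝ, u ≠ -τ → HasDerivAt D (k u * D u) u := by
    intro u hu
    have huτ : u + τ ≠ 0 := fun h => hu (by linarith)
    have h1 : HasDerivAt L₁ (deriv L₁ u) u := (hL₁d u hu).hasDerivAt
    have h2 : HasDerivAt L₂ (deriv L₂ u) u := (hL₂d u hu).hasDerivAt
    have e1 := hL₁ u hu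
    have e2 := hL₂ u hu
    have key : deriv L₁ u - deriv L₂ u = k u * D u := by
      simp only [hkdef, hDdef]
      rw [div_mul_eq_mul_div, eq_div_iff huτ]
      field_simp at e1 e2
      nlinarith [e1, e2]
    exact key ▸ (h1.sub h2)
  -- continuity of f near -τ
  have hopen : IsOpen {u : ℝ | f (-τ) / 2 < f u} := isOpen_lt continuous_const hf.continuous
  obtain ⟨ε, hε, hball⟩ := Metric.isOpen_iff.mp hopen (-τ) (by simp; linarith)
  have hfε : ∀ u : ℝ, |u + τ| < ε → f (-τ) / 2 ≤ f u := by
    intro u hu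
    have hmem : u ∈ Metric.ball (-τ) ε := by
      rw [Metric.mem_ball, Real.dist_eq]
      simpa [sub_neg_eq_add] using hu
    exact (hball hmem).le
  set b : ℝ := τ * f (-τ) with hbdef
  have hb : 0 < b := mul_pos hτ hfτ
  -- local vanishing on the right
  have hmono_right : ∀ u ∈ Set.Ioc (-τ) (-τ + ε), D u = 0 := by
    set ψ : ℝ → ℝ := fun u => (u + τ) ^ b * (D u) ^ 2 with hψ
    have hψc : Continuous ψ := by
      apply Continuous.mul ?_ (by fun_prop)
      rw [continuous_iff_continuousAt]
      intro u
      exact ContinuousAt.comp (x := u) (f := fun x : ℝ => x + τ) (g := fun x : ℝ => x ^ b)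
        (Real.continuousAt_rpow_const (u + τ) b (Or.inr hb.le)) (by fun_prop)
    have hψd : ∀ u ∈ Set.Ioo (-τ) (-τ + ε),
        HasDerivAt ψ ((u + τ) ^ (b - 1) * (D u) ^ 2 * (b - 2 * τ * f u)) u := by
      intro u hu
      have hx : 0 < u + τ := by linarith [hu.1]
      have hune : u ≠ -τ := by intro h; rw [h] at hx; simp at hx
      have h1 : HasDerivAt (fun u : ℝ => (u + τ) ^ b) (1 * b * (u + τ) ^ (b - 1)) u :=
        ((hasDerivAt_id u).add_const τ).rpow_const (Or.inl hx.ne')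
      have h2 : HasDerivAt (fun u => (D u) ^ 2) ((2 : ℕ) * D u ^ ((2 : ℕ) - 1) * (k u * D u)) u :=
        (hder u hune).pow 2
      have h3 := h1.mul h2
      refine h3.congr_deriv ?_
      symm
      have hsplit : (u + τ) ^ b = (u + τ) ^ (b - 1) * (u + τ) := by
        rw [← Real.rpow_add_one hx.ne']; ring_nf
      rw [hsplit]
      simp only [hkdef]
      field_simp
      ring
    have hanti : AntitoneOn ψ (Set.Icc (-τ) (-τ + ε)) := by
      apply antitoneOn_of_deriv_nonpos (convex_Icc _ _) hψc.continuousOn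
      · intro x hx
        rw [interior_Icc] at hx
        exact (hψd x hx).differentiableAt.differentiableWithinAt
      · intro x hx
        rw [interior_Icc] at hx
        rw [(hψd x hx).deriv]
        have hx0 : 0 < x + τ := by linarith [hx.1]
        have hfx : f (-τ) / 2 ≤ f x := hfε x (by rw [abs_of_pos hx0]; linarith [hx.2])
        have hle : b - 2 * τ * f x ≤ 0 := by rw [hbdef]; nlinarith
        have h1 : 0 ≤ (x + τ) ^ (b - 1) * (D x) ^ 2 :=
          mul_nonneg (Real.rpow_nonneg hx0.le _) (sq_nonneg _)
        exact mul_nonpos_of_nonneg_of_nonpos h1 hle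
    intro u hu
    have h0 : ψ (-τ) = 0 := by simp [hψ, Real.zero_rpow hb.ne']
    have hle1 : ψ u ≤ 0 := by
      have := hanti (Set.left_mem_Icc.mpr (by linarith)) ⟨hu.1.le, hu.2⟩ hu.1.le
      rwa [h0] at this
    have hle2 : 0 ≤ ψ u :=
      mul_nonneg (Real.rpow_nonneg (by linarith [hu.1]) _) (sq_nonneg _)
    have hψu : (u + τ) ^ b * (D u) ^ 2 = 0 := le_antisymm hle1 hle2
    have hp : (0:ℝ) < (u + τ) ^ b := Real.rpow_pos_of_pos (by linarith [hu.1]) _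
    have := (mul_eq_zero.mp hψu).resolve_left hp.ne'
    exact pow_eq_zero_iff (two_ne_zero) |>.mp this
  -- local vanishing on the left
  have hmono_left : ∀ u ∈ Set.Ico (-τ - ε) (-τ), D u = 0 := by
    set φ : ℝ → ℝ := fun u => (-(u + τ)) ^ b * (D u) ^ 2 with hφ
    have hφc : Continuous φ := by
      apply Continuous.mul ?_ (by fun_prop)
      rw [continuous_iff_continuousAt]
      intro u
      exact ContinuousAt.comp (x := u) (f := fun x : ℝ => -(x + τ)) (g := fun x : ℝ => x ^ b)
        (Real.continuousAt_rpow_const (-(u + τ)) b (Or.inr hb.le)) (by fun_prop)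
    have hφd : ∀ u ∈ Set.Ioo (-τ - ε) (-τ),
        HasDerivAt φ ((-(u + τ)) ^ (b - 1) * (D u) ^ 2 * (2 * τ * f u - b)) u := by
      intro u hu
      have hx : 0 < -(u + τ) := by linarith [hu.2]
      have huτ : u + τ ≠ 0 := by intro h; rw [h] at hx; simp at hx
      have hune : u ≠ -τ := fun h => huτ (by rw [h]; ring)
      have h1 : HasDerivAt (fun u : ℝ => (-(u + τ)) ^ b) ((-1) * b * (-(u + τ)) ^ (b - 1)) u :=
        (((hasDerivAt_id u).add_const τ).neg).rpow_const (Or.inl hx.ne')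
      have h2 : HasDerivAt (fun u => (D u) ^ 2) ((2 : ℕ) * D u ^ ((2 : ℕ) - 1) * (k u * D u)) u :=
        (hder u hune).pow 2
      have h3 := h1.mul h2
      refine h3.congr_deriv ?_
      symm
      have hsplit : (-(u + τ)) ^ b = (-(u + τ)) ^ (b - 1) * (-(u + τ)) := by
        rw [← Real.rpow_add_one hx.ne']; ring_nf
      rw [hsplit]
      simp only [hkdef]
      field_simp
      ring
    have hmono : MonotoneOn φ (Set.Icc (-τ - ε) (-τ)) := by
      apply monotoneOn_of_deriv_nonneg (convex_Icc _ _) hφc.continuousOn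
      · intro x hx
        rw [interior_Icc] at hx
        exact (hφd x hx).differentiableAt.differentiableWithinAt
      · intro x hx
        rw [interior_Icc] at hx
        rw [(hφd x hx).deriv]
        have hx0 : 0 < -(x + τ) := by linarith [hx.2]
        have hfx : f (-τ) / 2 ≤ f x := hfε x (by rw [abs_of_neg (by linarith : x + τ < 0)]; linarith [hx.1])
        have hle : 0 ≤ 2 * τ * f x - b := by rw [hbdef]; nlinarith
        have h1 : 0 ≤ (-(x + τ)) ^ (b - 1) * (D x) ^ 2 :=
          mul_nonneg (Real.rpow_nonneg hx0.le _) (sq_nonneg _)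
        exact mul_nonneg h1 hle
    intro u hu
    have h0 : φ (-τ) = 0 := by simp [hφ, Real.zero_rpow hb.ne']
    have hle1 : φ u ≤ 0 := by
      have := hmono ⟨hu.1, hu.2.le⟩ (Set.right_mem_Icc.mpr (by linarith)) hu.2.le
      rwa [h0] at this
    have hle2 : 0 ≤ φ u :=
      mul_nonneg (Real.rpow_nonneg (by linarith [hu.2]) _) (sq_nonneg _)
    have hφu : (-(u + τ)) ^ b * (D u) ^ 2 = 0 := le_antisymm hle1 hle2
    have hp : (0:ℝ) < (-(u + τ)) ^ b := Real.rpow_pos_of_pos (by linarith [hu.2]) _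
    have := (mul_eq_zero.mp hφu).resolve_left hp.ne'
    exact pow_eq_zero_iff (two_ne_zero) |>.mp this
  -- global right
  have hright : ∀ u : ℝ, -τ < u → D u = 0 := by
    intro u hu
    rcases le_or_gt u (-τ + ε / 2) with h | h
    · exact hmono_right u ⟨hu, by linarith⟩
    · set a : ℝ := -τ + ε / 2 with ha
      have hDa : D a = 0 := hmono_right a ⟨by rw [ha]; linarith, by rw [ha]; linarith⟩
      have hcont : ContinuousOn k (Set.Icc a u) := by
        simp only [hkdef]
        apply ContinuousOn.div ((continuous_const.mul hf.continuous).continuousOn) (by fun_prop)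
        intro x hx
        have : 0 < x + τ := by
          have := hx.1; rw [ha] at this; linarith
        exact this.ne'
      obtain ⟨C, hC⟩ := isCompact_Icc.exists_bound_of_continuousOn hcont
      have hall := gron_zero (hDc.continuousOn)
        (fun t ht => hder t (by
          have := ht.1; rw [ha] at this
          intro hh; rw [hh] at this; linarith))
        (fun t ht => by simpa [Real.norm_eq_abs] using hC t (Set.Ico_subset_Icc_self ht))
        hDa
      exact hall u ⟨h.le, le_refl _⟩
  -- global left
  have hleft : ∀ u : ℝ, u < -τ → D u = 0 := by
    intro u hu
    rcases le_or_gt (-τ - ε / 2) u with h | h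
    · exact hmono_left u ⟨by linarith, hu⟩
    · set a : ℝ := -τ - ε / 2 with ha
      have haτ : a < -τ := by rw [ha]; linarith
      have hDa : D a = 0 := hmono_left a ⟨by rw [ha]; linarith, haτ⟩
      set E : ℝ → ℝ := fun s => D (2 * a - s) with hE
      set k' : ℝ → ℝ := fun s => -k (2 * a - s) with hk'
      have hne : ∀ s : ℝ, a ≤ s → (2 * a - s) ≠ -τ := by
        intro s hs hh
        have : 2 * a - s ≤ a := by linarith
        rw [hh] at this; linarith
      have hEd : ∀ s : ℝ, a ≤ s → HasDerivAt E (k' s * E s) s := by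
        intro s hs
        have h1 : HasDerivAt (fun s : ℝ => 2 * a - s) (-1) s :=
          (hasDerivAt_id s).const_sub (2 * a)
        have h2 := (hder (2 * a - s) (hne s hs)).comp s h1
        refine h2.congr_deriv ?_
        symm
        simp only [hk', hE]
        ring
      have hEc : Continuous E := hDc.comp (by fun_prop)
      have hkc : ContinuousOn k' (Set.Icc a (2 * a - u)) := by
        simp only [hk', hkdef]
        apply ContinuousOn.neg
        apply ContinuousOn.div
          ((continuous_const.mul (hf.continuous.comp (by fun_prop))).continuousOn) (by fun_prop)
        intro x hx
        have hxa : 2 * a - x ≤ a := by linarith [hx.1]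
        have : 2 * a - x + τ < 0 := by
          have : a + τ < 0 := by rw [ha]; linarith
          linarith
        exact this.ne
      obtain ⟨C, hC⟩ := isCompact_Icc.exists_bound_of_continuousOn hkc
      have hall := gron_zero (hEc.continuousOn)
        (fun t ht => hEd t ht.1)
        (fun t ht => by simpa [Real.norm_eq_abs] using hC t (Set.Ico_subset_Icc_self ht))
        (by show D (2 * a - a) = 0; convert hDa using 2; ring)
      have := hall (2 * a - u) ⟨by linarith, le_refl _⟩
      simpa [hE] using this
  -- value at -τ
  have hmid : D (-τ) = 0 := by
    have h1 : Filter.Tendsto D (nhdsWithin (-τ) (Set.Ioi (-τ))) (nhds (D (-τ))) :=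
      (hDc.tendsto _).mono_left nhdsWithin_le_nhds
    have h2 : Filter.Tendsto D (nhdsWithin (-τ) (Set.Ioi (-τ))) (nhds 0) := by
      apply Filter.Tendsto.congr' _ tendsto_const_nhds
      filter_upwards [self_mem_nhdsWithin] with x hx
      exact (hright x hx).symm
    exact tendsto_nhds_unique h1 h2
  funext u
  have hu0 : D u = 0 := by
    rcases lt_trichotomy u (-τ) with h | h | h
    · exact hleft u h
    · rw [h]; exact hmid
    · exact hright u h
  have : L₁ u - L₂ u = 0 := hu0
  linarith
end

section
/- Let τ > 0 and let f, g : ℝ → ℝ be C^2 with f(−τ) > 0. The unique continuous solution L of (1 + u/τ) L'(u) + f(u) L(u) − g(u) = 0 is differentiable at −τ with L'(−τ) = (g/f)'(−τ) / (1 + 1/(τ f(−τ))). -/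
/-!
With `q = g / f` and `a = τ f` the equation reads `(u + τ) L' = -a (L - q)`, singular at `u = -τ`.
Continuity of `L` forces `L (-τ) = q (-τ)`: otherwise `(u + τ) L'` stays away from `0` and the mean
value theorem makes `L` jump. Then `D = L - q - m (u + τ)`, with `m` chosen so that the remainder
vanishes at `-τ`, satisfies `D' = -a D / (u + τ) - r` with `r → 0`, and comparison with `± ε (u + τ)`
shows `D / (u + τ) → 0` from both sides. Hence `L' (-τ) = q' (-τ) + m = a q' / (a + 1)`.
-/

open Set Filter Topology

theorem continuousOn_Icc_of_continuousWithinAt_Ici {E : Type*} [TopologicalSpace E] {f : ℝ → E}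
    {a b : ℝ} (ha : ContinuousWithinAt f (Ici a) a) (hf : ∀ x ∈ Ioc a b, ContinuousAt f x) :
    ContinuousOn f (Icc a b) := by
  intro x hx
  rcases hx.1.eq_or_lt with rfl | hax
  · exact ha.mono Icc_subset_Ici_self
  · exact (hf x ⟨hax, hx.2⟩).continuousWithinAt

theorem nonpos_of_hasDerivAt_nonpos_of_pos {φ φ' : ℝ → ℝ} {a b : ℝ}
    (hc : ContinuousOn φ (Icc a b)) (ha : φ a ≤ 0) (hd : ∀ x ∈ Ioo a b, HasDerivAt φ (φ' x) x)
    (hφ' : ∀ x ∈ Ioo a b, 0 < φ x → φ' x ≤ 0) : ∀ x ∈ Icc a b, φ x ≤ 0 := by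
  intro x hx
  by_contra! hx₀
  -- On `(c, x)`, with `c` the last point before `x` where `φ ≤ 0`, the slope of `φ` is `≤ 0`.
  set S := Icc a x ∩ φ ⁻¹' Iic 0
  have hS : IsClosed S :=
    (hc.mono (Icc_subset_Icc_right hx.2)).preimage_isClosed_of_isClosed isClosed_Icc isClosed_Iic
  have haS : a ∈ S := ⟨left_mem_Icc.2 hx.1, ha⟩
  have hSbdd : BddAbove S := ⟨x, fun y hy => hy.1.2⟩
  set c := sSup S
  have hcS : c ∈ S := hS.csSup_mem ⟨a, haS⟩ hSbdd
  have hac : a ≤ c := le_csSup hSbdd haS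
  have hφc : φ c ≤ 0 := hcS.2
  have hcx : c < x := hcS.1.2.lt_of_ne fun h => by rw [h] at hφc; linarith
  have hpos : ∀ y ∈ Ioo c x, 0 < φ y := fun y hy => by
    by_contra! hy₀
    exact (not_le.2 hy.1) (le_csSup hSbdd ⟨⟨hac.trans hy.1.le, hy.2.le⟩, hy₀⟩)
  have hsub : Ioo c x ⊆ Ioo a b := Ioo_subset_Ioo hac hx.2
  obtain ⟨ξ, hξ, hslope⟩ := exists_hasDerivAt_eq_slope φ φ' hcx
    (hc.mono (Icc_subset_Icc hac hx.2)) fun y hy => hd y (hsub hy)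
  have hξ' := hφ' ξ (hsub hξ) (hpos ξ hξ)
  rw [hslope, div_le_iff₀ (sub_pos.2 hcx), zero_mul] at hξ'
  linarith

theorem eq_zero_of_tendsto_sub_mul_of_hasDerivAt {L L' : ℝ → ℝ} {x₀ c : ℝ}
    (hc : ContinuousWithinAt L (Ici x₀) x₀) (hL : ∀ᶠ x in 𝓝[>] x₀, HasDerivAt L (L' x) x)
    (h : Tendsto (fun x => (x - x₀) * L' x) (𝓝[>] x₀) (𝓝 c)) : c = 0 := by
  by_contra hc₀
  -- By the mean value theorem `|L u - L x₀| ≥ |(ξ - x₀) L' ξ|` for some `ξ ∈ (x₀, u)`,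
  -- which stays away from `0` as `u → x₀⁺`, against the continuity of `L` at `x₀`.
  have hbig : ∀ᶠ x in 𝓝[>] x₀, |c| / 2 < |(x - x₀) * L' x| :=
    h.abs.eventually (lt_mem_nhds (half_lt_self (abs_pos.2 hc₀)))
  obtain ⟨b, hb, hsub⟩ := mem_nhdsGT_iff_exists_Ioo_subset.1 (hL.and hbig)
  have hsmall : ∀ᶠ x in 𝓝[>] x₀, |L x - L x₀| < |c| / 2 := by
    simpa only [Real.dist_eq] using
      Metric.tendsto_nhds.1 (hc.mono Ioi_subset_Ici_self) _ (half_pos (abs_pos.2 hc₀))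
  obtain ⟨u, hLu, hu⟩ := (hsmall.and (Ioo_mem_nhdsGT hb)).exists
  obtain ⟨ξ, hξ, hslope⟩ := exists_hasDerivAt_eq_slope L L' hu.1
    (continuousOn_Icc_of_continuousWithinAt_Ici hc fun x hx =>
      (hsub ⟨hx.1, hx.2.trans_lt hu.2⟩).1.continuousAt)
    fun x hx => (hsub ⟨hx.1, hx.2.trans hu.2⟩).1
  have hξbig := (hsub ⟨hξ.1, hξ.2.trans hu.2⟩).2
  have hu₀ : 0 < u - x₀ := sub_pos.2 hu.1
  have : |(ξ - x₀) * L' ξ| ≤ |L u - L x₀| := by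
    rw [abs_mul, abs_of_pos (sub_pos.2 hξ.1), hslope, abs_div, abs_of_pos hu₀]
    calc (ξ - x₀) * (|L u - L x₀| / (u - x₀)) ≤ (u - x₀) * (|L u - L x₀| / (u - x₀)) := by
          gcongr; exact hξ.2.le
      _ = |L u - L x₀| := mul_div_cancel₀ _ hu₀.ne'
  linarith

section Singular

variable {D a r : ℝ → ℝ} {x₀ α : ℝ}

theorem le_mul_sub_of_hasDerivAt_singular {b ε : ℝ} (hα : 0 ≤ α) (hε : 0 ≤ ε)
    (hc : ContinuousOn D (Icc x₀ b)) (h₀ : D x₀ = 0)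
    (hD : ∀ x ∈ Ioo x₀ b, HasDerivAt D (-a x * (D x / (x - x₀)) - r x) x)
    (ha : ∀ x ∈ Ioo x₀ b, α ≤ a x) (hr : ∀ x ∈ Ioo x₀ b, -r x ≤ α * ε) :
    ∀ x ∈ Icc x₀ b, D x ≤ ε * (x - x₀) := by
  have key := nonpos_of_hasDerivAt_nonpos_of_pos (φ := fun x => D x - ε * (x - x₀))
    (φ' := fun x => -a x * (D x / (x - x₀)) - r x - ε) (hc.sub (by fun_prop)) (by simp [h₀])
    (fun x hx => by simpa using (hD x hx).fun_sub (((hasDerivAt_id' x).sub_const x₀).const_mul ε))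
    fun x hx hpos => by
      have hs : 0 < x - x₀ := sub_pos.2 hx.1
      have hεD : ε ≤ D x / (x - x₀) := (le_div_iff₀ hs).2 (by linarith)
      have := mul_le_mul (ha x hx) hεD hε (hα.trans (ha x hx))
      linarith [hr x hx]
  exact fun x hx => sub_nonpos.1 (key x hx)

theorem tendsto_div_sub_nhdsGT_of_hasDerivAt_singular (hα : 0 < α)
    (hc : ContinuousWithinAt D (Ici x₀) x₀) (h₀ : D x₀ = 0)
    (hD : ∀ᶠ x in 𝓝[>] x₀, HasDerivAt D (-a x * (D x / (x - x₀)) - r x) x)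
    (ha : ∀ᶠ x in 𝓝[>] x₀, α ≤ a x) (hr : Tendsto r (𝓝[>] x₀) (𝓝 0)) :
    Tendsto (fun x => D x / (x - x₀)) (𝓝[>] x₀) (𝓝 0) := by
  rw [Metric.tendsto_nhds]
  intro ε hε
  have hr' : ∀ᶠ x in 𝓝[>] x₀, |r x| ≤ α * (ε / 2) := by
    simpa [Real.dist_eq] using (Metric.tendsto_nhds.1 hr _ (by positivity)).mono fun _ => le_of_lt
  obtain ⟨b, hb, hsub⟩ := mem_nhdsGT_iff_exists_Ioo_subset.1 (hD.and (ha.and hr'))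
  filter_upwards [Ioo_mem_nhdsGT hb] with x hx
  have hIoo : ∀ y ∈ Ioo x₀ x, y ∈ Ioo x₀ b := fun y hy => ⟨hy.1, hy.2.trans hx.2⟩
  have hcont : ContinuousOn D (Icc x₀ x) := continuousOn_Icc_of_continuousWithinAt_Ici hc
    fun y hy => (hsub ⟨hy.1, hy.2.trans_lt hx.2⟩).1.continuousAt
  have hupper := le_mul_sub_of_hasDerivAt_singular (hε := half_pos hε |>.le) hα.le hcont h₀
    (fun y hy => (hsub (hIoo y hy)).1) (fun y hy => (hsub (hIoo y hy)).2.1)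
    (fun y hy => by linarith [abs_le.1 (hsub (hIoo y hy)).2.2]) x (right_mem_Icc.2 hx.1.le)
  have hlower := le_mul_sub_of_hasDerivAt_singular (D := -D) (r := -r) (hε := half_pos hε |>.le)
    hα.le hcont.neg (by simp [h₀])
    (fun y hy => (hsub (hIoo y hy)).1.neg.congr_deriv (by simp only [Pi.neg_apply, neg_div]; ring))
    (fun y hy => (hsub (hIoo y hy)).2.1)
    (fun y hy => by simpa using (abs_le.1 (hsub (hIoo y hy)).2.2).2) x (right_mem_Icc.2 hx.1.le)
  have hs : 0 < x - x₀ := sub_pos.2 hx.1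
  rw [dist_zero_right, Real.norm_eq_abs, abs_div, abs_of_pos hs, div_lt_iff₀ hs, abs_lt]
  rw [Pi.neg_apply] at hlower
  constructor <;> nlinarith

theorem tendsto_div_sub_nhdsNE_of_hasDerivAt_singular (hα : 0 < α)
    (hc : ContinuousAt D x₀) (h₀ : D x₀ = 0)
    (hD : ∀ᶠ x in 𝓝[≠] x₀, HasDerivAt D (-a x * (D x / (x - x₀)) - r x) x)
    (ha : ∀ᶠ x in 𝓝[≠] x₀, α ≤ a x) (hr : Tendsto r (𝓝[≠] x₀) (𝓝 0)) :
    Tendsto (fun x => D x / (x - x₀)) (𝓝[≠] x₀) (𝓝 0) := by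
  have hGT := nhdsGT_le_nhdsNE x₀
  have hLT := nhdsLT_le_nhdsNE x₀
  rw [← nhdsLT_sup_nhdsGT]
  refine Tendsto.sup ?_ (tendsto_div_sub_nhdsGT_of_hasDerivAt_singular hα hc.continuousWithinAt h₀
    (hD.filter_mono hGT) (ha.filter_mono hGT) (hr.mono_left hGT))
  -- The left limit is the right limit at `-x₀` of the reflected equation for `y ↦ D (-y)`.
  have hneg : Tendsto Neg.neg (𝓝[>] (-x₀)) (𝓝[<] x₀) := tendsto_neg_nhdsGT_neg
  have hreflect := tendsto_div_sub_nhdsGT_of_hasDerivAt_singular (D := fun y => D (-y))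
    (a := fun y => a (-y)) (r := fun y => -r (-y)) (x₀ := -x₀) hα
    (hc.comp_of_eq continuousAt_neg (neg_neg x₀)).continuousWithinAt (by simpa using h₀)
    ((hneg.eventually (hD.filter_mono hLT)).mono fun y hy =>
      (hy.comp y (hasDerivAt_neg y)).congr_deriv (by
        rw [show -y - x₀ = -(y - -x₀) by ring, div_neg]; ring))
    (hneg.eventually (ha.filter_mono hLT)) (by simpa using ((hr.mono_left hLT).comp hneg).neg)
  have h := (hreflect.comp (tendsto_neg_nhdsLT (a := x₀))).neg
  rw [neg_zero] at h
  refine h.congr fun x => ?_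
  simp only [Function.comp, neg_neg]
  rw [show -x - -x₀ = -(x - x₀) by ring, div_neg, neg_neg]

theorem eq_of_hasDerivAt_singular_linear {L q : ℝ → ℝ} (hq : ContinuousAt q x₀)
    (ha : ContinuousAt a x₀) (ha₀ : a x₀ ≠ 0) (hLc : ContinuousAt L x₀)
    (hL : ∀ᶠ x in 𝓝[>] x₀, HasDerivAt L (-a x * ((L x - q x) / (x - x₀))) x) :
    L x₀ = q x₀ := by
  have hlim : Tendsto (fun x => (x - x₀) * (-a x * ((L x - q x) / (x - x₀)))) (𝓝[>] x₀)
      (𝓝 (-a x₀ * (L x₀ - q x₀))) := by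
    refine (((ha.neg.mul (hLc.sub hq)).tendsto).mono_left nhdsWithin_le_nhds).congr' ?_
    filter_upwards [self_mem_nhdsWithin] with x hx
    have hx' : x - x₀ ≠ 0 := (sub_pos.2 hx).ne'
    simp only [Pi.mul_apply, Pi.neg_apply, Pi.sub_apply]
    field_simp
  have := eq_zero_of_tendsto_sub_mul_of_hasDerivAt hLc.continuousWithinAt hL hlim
  simpa [ha₀, sub_eq_zero] using this

theorem hasDerivAt_of_hasDerivAt_singular_linear {L q : ℝ → ℝ} (hq : ContDiffAt ℝ 1 q x₀)
    (ha : ContinuousAt a x₀) (ha₀ : 0 < a x₀) (hLc : ContinuousAt L x₀)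
    (hL : ∀ᶠ x in 𝓝[≠] x₀, HasDerivAt L (-a x * ((L x - q x) / (x - x₀))) x) :
    HasDerivAt L (a x₀ * deriv q x₀ / (a x₀ + 1)) x₀ := by
  have hq' : ∀ᶠ x in 𝓝 x₀, HasDerivAt q (deriv q x) x :=
    (hq.eventually (by simp)).mono fun x hx => (hx.differentiableAt one_ne_zero).hasDerivAt
  have hq'c : ContinuousAt (deriv q) x₀ := (hq.derivWithin (m := 0) (by simp)).continuousAt
  have hLq : L x₀ = q x₀ := eq_of_hasDerivAt_singular_linear hq.continuousAt ha ha₀.ne' hLc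
    (hL.filter_mono (nhdsGT_le_nhdsNE x₀))
  set m := -deriv q x₀ / (a x₀ + 1)
  set D := fun x => L x - q x - m * (x - x₀)
  set r := fun x => (a x + 1) * m + deriv q x
  have hD : ∀ᶠ x in 𝓝[≠] x₀, HasDerivAt D (-a x * (D x / (x - x₀)) - r x) x := by
    filter_upwards [hL, hq'.filter_mono nhdsWithin_le_nhds, self_mem_nhdsWithin] with x hLx hqx hx
    have hx' : x - x₀ ≠ 0 := sub_ne_zero.2 hx
    refine ((hLx.sub hqx).sub ((hasDerivAt_id' x |>.sub_const x₀).const_mul m)).congr_deriv ?_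
    simp only [D, r]
    field_simp
    ring
  have hr : Tendsto r (𝓝[≠] x₀) (𝓝 0) := by
    have hr₀ : r x₀ = 0 := by simp only [r, m]; field_simp; ring
    exact hr₀ ▸ (show ContinuousAt r x₀ by fun_prop).tendsto.mono_left nhdsWithin_le_nhds
  have hDlim := tendsto_div_sub_nhdsNE_of_hasDerivAt_singular (half_pos ha₀)
    (by fun_prop) (by simp [D, hLq]) hD
    ((ha.eventually (Ici_mem_nhds (half_lt_self ha₀))).filter_mono nhdsWithin_le_nhds) hr
  have hslope := hasDerivAt_iff_tendsto_slope.1 hq'.self_of_nhds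
  have hval : a x₀ * deriv q x₀ / (a x₀ + 1) = 0 + deriv q x₀ + m := by
    simp only [m]; field_simp; ring
  rw [hasDerivAt_iff_tendsto_slope, hval]
  refine ((hDlim.add hslope).add_const m).congr' ?_
  filter_upwards [self_mem_nhdsWithin] with x hx
  have hx' : x - x₀ ≠ 0 := sub_ne_zero.2 hx
  simp only [slope_def_field, D, hLq]
  field_simp
  ring

end Singular

/-- For `τ > 0` and `f, g` of class `C²` with `f(−τ) > 0`, the (unique) continuous solution
`L` of `(1 + u/τ) L'(u) + f(u) L(u) − g(u) = 0` is differentiable at `−τ` with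
`L'(−τ) = (g/f)'(−τ) / (1 + 1/(τ f(−τ)))`. -/
theorem stmt10 (τ : ℝ) (hτ : 0 < τ) (f g : ℝ → ℝ)
    (hf : ContDiff ℝ 2 f) (hg : ContDiff ℝ 2 g) (hfτ : 0 < f (-τ))
    (L : ℝ → ℝ) (hLc : Continuous L)
    (hLd : ∀ u : ℝ, u ≠ -τ → DifferentiableAt ℝ L u)
    (hL : ∀ u : ℝ, u ≠ -τ → (1 + u / τ) * deriv L u + f u * L u - g u = 0) :
    HasDerivAt L (deriv (fun u => g u / f u) (-τ) / (1 + 1 / (τ * f (-τ)))) (-τ) := by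
  have hf₀ : ∀ᶠ u in 𝓝 (-τ), f u ≠ 0 := hf.continuous.continuousAt.eventually_ne hfτ.ne'
  have hL' : ∀ᶠ u in 𝓝[≠] (-τ),
      HasDerivAt L (-(τ * f u) * ((L u - g u / f u) / (u - -τ))) u := by
    filter_upwards [self_mem_nhdsWithin, hf₀.filter_mono nhdsWithin_le_nhds] with u hu hfu
    refine (hLd u hu).hasDerivAt.congr_deriv ?_
    have hs : u - -τ ≠ 0 := sub_ne_zero.2 hu
    have := hL u hu
    field_simp at this ⊢
    linarith
  have hq : ContDiffAt ℝ 1 (fun u => g u / f u) (-τ) :=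
    (hg.contDiffAt.div hf.contDiffAt hfτ.ne').of_le (by norm_num)
  convert hasDerivAt_of_hasDerivAt_singular_linear (a := fun u => τ * f u) hq
    (hf.continuous.continuousAt.const_mul τ) (by positivity) hLc.continuousAt hL' using 1
  field_simp
end

section
/- Let τ > 0 and let f, g be C^2 real functions with f > 0, g > 0, f' < 0, and g' > 0 on an open interval I containing −τ, and with f(−τ) > 0. Then the unique continuous solution L of (1 + u/τ) L'(u) + f(u) L(u) − g(u) = 0 is strictly increasing on I. -/
/-!
Put `a = -τ`, `k = τ f` and `φ = g / f`; the equation becomes `(u - a) L' = k (φ - L)` with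
`k > 0`, and `φ` is strictly increasing because `f' < 0 < g'`.

If `L a ≠ φ a`, then near `a⁺` we have `L' ≥ c / (u - a)` for some `c > 0` (or the same
for `-L`), so `L - c log (u - a)` is monotone and `L → -∞` at `a⁺`, contradicting continuity.
Hence `L a = φ a`. To the right of `a` the gap `φ - L` cannot become `≤ 0`: wherever it is
`≤ 0`, its derivative is at least `φ' > 0`, so a minimiser of the gap would have points with
smaller values just to its left. Thus `L' = k (φ - L) / (u - a) > 0` on `(a, q)`. The reflection
`x ↦ -L (-x)` solves an equation of the same form, which handles `(p, a)`.
-/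

open Real Set Filter Topology

lemma not_continuousWithinAt_of_hasDerivAt_div {L G : ℝ → ℝ} {a : ℝ}
    (hG : ContinuousWithinAt G (Ioi a) a) (hGa : G a ≠ 0)
    (hL : ∀ᶠ u in 𝓝[>] a, HasDerivAt L (G u / (u - a)) u) :
    ¬ ContinuousWithinAt L (Ioi a) a := by
  wlog hGa_pos : 0 < G a generalizing L G
  · have hGa_neg : 0 < -G a := neg_pos.2 (hGa.lt_or_gt.resolve_right hGa_pos)
    refine fun hLa ↦ this (L := -L) (G := -G) hG.neg (neg_ne_zero.2 hGa) ?_ hGa_neg hLa.neg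
    filter_upwards [hL] with u hu using by simpa [neg_div] using hu.neg
  intro hLa
  set C := G a / 2
  have hC : 0 < C := half_pos hGa_pos
  obtain ⟨b, hab : a < b, hb⟩ := mem_nhdsGT_iff_exists_Ioo_subset.1
    (hL.and (hG.eventually (lt_mem_nhds (half_lt_self hGa_pos))))
  set M : ℝ → ℝ := fun u ↦ L u - C * log (u - a)
  have hM : ∀ u ∈ Ioo a b, HasDerivAt M ((G u - C) / (u - a)) u := by
    intro u hu
    have hlog := ((hasDerivAt_id' u).sub_const a).log (sub_pos.2 hu.1).ne'
    exact ((hb hu).1.sub (hlog.const_mul C)).congr_deriv (by ring)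
  have hM_mono : MonotoneOn M (Ioo a b) := by
    refine monotoneOn_of_hasDerivWithinAt_nonneg (f' := fun u ↦ (G u - C) / (u - a))
      (convex_Ioo a b) (fun u hu ↦ (hM u hu).continuousAt.continuousWithinAt)
      (fun u hu ↦ ?_) (fun u hu ↦ ?_)
    · rw [interior_Ioo] at hu
      exact (hM u hu).hasDerivWithinAt
    · rw [interior_Ioo] at hu
      exact div_nonneg (sub_nonneg.2 (hb hu).2.le) (sub_pos.2 hu.1).le
  obtain ⟨c, hc⟩ : (Ioo a b).Nonempty := nonempty_Ioo.2 hab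
  have hL_le : ∀ᶠ x in 𝓝[>] a, L x ≤ M c + C * log (x - a) := by
    filter_upwards [Ioo_mem_nhdsGT hc.1] with x hx
    have := hM_mono ⟨hx.1, hx.2.trans hc.2⟩ hc hx.2.le
    simp only [M] at this
    linarith
  have hlog : Tendsto (fun x ↦ M c + C * log (x - a)) (𝓝[>] a) atBot := by
    refine tendsto_atBot_add_const_left _ _ (Tendsto.const_mul_atBot hC ?_)
    refine tendsto_log_nhdsGT_zero.comp
      (tendsto_nhdsWithin_of_tendsto_nhds_of_eventually_within _ ?_ ?_)
    · simpa using ((continuous_sub_right a).tendsto a).mono_left nhdsWithin_le_nhds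
    · filter_upwards [self_mem_nhdsWithin] with x hx using sub_pos.2 (mem_Ioi.1 hx)
  exact not_tendsto_atBot_of_tendsto_nhds hLa (tendsto_atBot_mono' _ hL_le hlog)

lemma exists_lt_of_hasDerivAt_pos {D : ℝ → ℝ} {d x a : ℝ} (hD : HasDerivAt D d x)
    (hd : 0 < d) (hax : a < x) : ∃ y ∈ Ioo a x, D y < D x := by
  have hslope : ∀ᶠ y in 𝓝[<] x, 0 < slope D x y :=
    (hasDerivAt_iff_tendsto_slope_left_right.1 hD).1.eventually (lt_mem_nhds hd)
  obtain ⟨y, hy, hy'⟩ := (Filter.Eventually.and (Ioo_mem_nhdsLT hax) hslope).exists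
  refine ⟨y, hy, ?_⟩
  rw [slope_def_field] at hy'
  have hyx : y - x < 0 := sub_neg.2 hy.2
  have := (div_pos_iff.1 hy').resolve_left (fun h ↦ h.2.not_gt hyx)
  linarith [this.1]

lemma pos_of_hasDerivAt_pos_of_nonpos {D D' : ℝ → ℝ} {a b : ℝ} (hab : a < b)
    (hD : ContinuousOn D (Icc a b)) (ha : 0 ≤ D a)
    (hD' : ∀ x ∈ Ioc a b, HasDerivAt D (D' x) x)
    (hpos : ∀ x ∈ Ioc a b, D x ≤ 0 → 0 < D' x) : 0 < D b := by
  by_contra! hb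
  obtain ⟨c, hc, hmin⟩ := isCompact_Icc.exists_isMinOn (nonempty_Icc.2 hab.le) hD
  have : ∃ c ∈ Ioc a b, D c ≤ 0 ∧ IsMinOn D (Icc a b) c := by
    rcases hc.1.eq_or_lt with rfl | hac
    · refine ⟨b, ⟨hab, le_rfl⟩, hb, fun x hx ↦ ?_⟩
      exact (le_trans hb ha).trans (hmin hx)
    · exact ⟨c, ⟨hac, hc.2⟩, (hmin ⟨hab.le, le_rfl⟩).trans hb, hmin⟩
  obtain ⟨c, hc, hDc, hmin⟩ := this
  obtain ⟨y, hy, hlt⟩ := exists_lt_of_hasDerivAt_pos (hD' c hc) (hpos c hc hDc) hc.1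
  exact hlt.not_ge (hmin ⟨hy.1.le, hy.2.le.trans hc.2⟩)

section SingularODE

variable {L k φ φ' : ℝ → ℝ}

lemma strictMonoOn_Ico_of_singular_ode {a q : ℝ} (haq : a < q) (hL : ContinuousOn L (Ico a q))
    (hk : ContinuousOn k (Ico a q)) (hφ : ContinuousOn φ (Ico a q))
    (hk_pos : ∀ u ∈ Ico a q, 0 < k u)
    (hφ' : ∀ u ∈ Ioo a q, HasDerivAt φ (φ' u) u) (hφ'_pos : ∀ u ∈ Ioo a q, 0 < φ' u)
    (hL' : ∀ u ∈ Ioo a q, HasDerivAt L (k u * (φ u - L u) / (u - a)) u) :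
    StrictMonoOn L (Ico a q) := by
  have ha : a ∈ Ico a q := ⟨le_rfl, haq⟩
  have hLa : L a = φ a := by
    by_contra hne
    have hmem : Ico a q ∈ 𝓝[>] a := Ico_mem_nhdsGT haq
    refine not_continuousWithinAt_of_hasDerivAt_div (G := fun u ↦ k u * (φ u - L u))
      (((hk a ha).mul ((hφ a ha).sub (hL a ha))).mono_of_mem_nhdsWithin hmem)
      (mul_ne_zero (hk_pos a ha).ne' (sub_ne_zero.2 (Ne.symm hne))) ?_
      ((hL a ha).mono_of_mem_nhdsWithin hmem)
    filter_upwards [Ioo_mem_nhdsGT haq] with u hu using hL' u hu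
  have hgap : ∀ u ∈ Ioo a q, L u < φ u := by
    intro x hx
    have hsub : Ioc a x ⊆ Ioo a q := fun y hy ↦ ⟨hy.1, hy.2.trans_lt hx.2⟩
    refine sub_pos.1 (pos_of_hasDerivAt_pos_of_nonpos (D := fun u ↦ φ u - L u) hx.1
      ((hφ.sub hL).mono (Icc_subset_Ico_right hx.2)) (by simp [hLa])
      (fun y hy ↦ (hφ' y (hsub hy)).sub (hL' y (hsub hy))) fun y hy hDy ↦ ?_)
    have hy' : y ∈ Ioo a q := hsub hy
    have : k y * (φ y - L y) / (y - a) ≤ 0 := div_nonpos_of_nonpos_of_nonneg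
      (mul_nonpos_of_nonneg_of_nonpos (hk_pos y (Ioo_subset_Ico_self hy')).le hDy)
      (sub_pos.2 hy.1).le
    linarith [hφ'_pos y hy']
  refine strictMonoOn_of_deriv_pos (convex_Ico a q) hL fun u hu ↦ ?_
  rw [interior_Ico] at hu
  rw [(hL' u hu).deriv]
  exact div_pos (mul_pos (hk_pos u (Ioo_subset_Ico_self hu)) (sub_pos.2 (hgap u hu)))
    (sub_pos.2 hu.1)

lemma strictMonoOn_of_singular_ode {p q a : ℝ} (ha : a ∈ Ioo p q)
    (hL : ContinuousOn L (Ioo p q)) (hk : ContinuousOn k (Ioo p q))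
    (hk_pos : ∀ u ∈ Ioo p q, 0 < k u)
    (hφ' : ∀ u ∈ Ioo p q, HasDerivAt φ (φ' u) u) (hφ'_pos : ∀ u ∈ Ioo p q, 0 < φ' u)
    (hL' : ∀ u ∈ Ioo p q, u ≠ a → HasDerivAt L (k u * (φ u - L u) / (u - a)) u) :
    StrictMonoOn L (Ioo p q) := by
  have hφ : ContinuousOn φ (Ioo p q) := fun u hu ↦ (hφ' u hu).continuousAt.continuousWithinAt
  have hright : StrictMonoOn L (Ico a q) := by
    have hsub : Ico a q ⊆ Ioo p q := Ico_subset_Ioo_left ha.1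
    exact strictMonoOn_Ico_of_singular_ode ha.2 (hL.mono hsub) (hk.mono hsub) (hφ.mono hsub)
      (fun u hu ↦ hk_pos u (hsub hu)) (fun u hu ↦ hφ' u (hsub (Ioo_subset_Ico_self hu)))
      (fun u hu ↦ hφ'_pos u (hsub (Ioo_subset_Ico_self hu)))
      (fun u hu ↦ hL' u (hsub (Ioo_subset_Ico_self hu)) hu.1.ne')
  have hleft : StrictMonoOn L (Ioc p a) := by
    have hneg : MapsTo Neg.neg (Ico (-a) (-p)) (Ioo p q) := fun x hx ↦
      ⟨lt_neg_of_lt_neg hx.2, (neg_le.1 hx.1).trans_lt ha.2⟩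
    have hneg' : ∀ x ∈ Ioo (-a) (-p), -x ∈ Ioo p q ∧ -x ≠ a := fun x hx ↦
      ⟨hneg (Ioo_subset_Ico_self hx), fun h ↦ hx.1.ne' (by rw [← h, neg_neg])⟩
    have hmirror := strictMonoOn_Ico_of_singular_ode (L := fun x ↦ -L (-x))
      (k := fun x ↦ k (-x)) (φ := fun x ↦ -φ (-x)) (φ' := fun x ↦ φ' (-x))
      (neg_lt_neg ha.1) (hL.comp continuousOn_neg hneg).neg (hk.comp continuousOn_neg hneg)
      (hφ.comp continuousOn_neg hneg).neg (fun x hx ↦ hk_pos _ (hneg hx))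
      (fun x hx ↦ ?_) (fun x hx ↦ hφ'_pos _ (hneg' x hx).1) (fun x hx ↦ ?_)
    · intro x hx y hy hxy
      have := hmirror ⟨neg_le_neg hy.2, neg_lt_neg hy.1⟩ ⟨neg_le_neg hx.2, neg_lt_neg hx.1⟩
        (neg_lt_neg hxy)
      simpa using this
    · exact (((hφ' _ (hneg' x hx).1).comp x (hasDerivAt_neg' x)).neg).congr_deriv (by ring)
    · refine (((hL' _ (hneg' x hx).1 (hneg' x hx).2).comp x
        (hasDerivAt_neg' x)).neg).congr_deriv ?_
      rw [sub_neg_eq_add, ← neg_add', div_neg]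
      ring
  rw [← Ioc_union_Ico_eq_Ioo ha.1 ha.2]
  exact hleft.union hright (isGreatest_Ioc ha.1) (isLeast_Ico ha.2)

end SingularODE

/-- Let `τ > 0`, `f, g` of class `C²` with `f > 0`, `g > 0`, `f' < 0`, `g' > 0` on an open
interval `I = (p, q)` containing `−τ` (and `f(−τ) > 0`). Then the unique continuous solution
`L` of `(1 + u/τ) L'(u) + f(u) L(u) − g(u) = 0` is strictly increasing on `I`. -/
theorem stmt11 (τ : ℝ) (hτ : 0 < τ) (f g : ℝ → ℝ)
    (hf : ContDiff ℝ 2 f) (hg : ContDiff ℝ 2 g)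
    (p q : ℝ) (hpq : -τ ∈ Set.Ioo p q)
    (hfpos : ∀ u ∈ Set.Ioo p q, 0 < f u) (hgpos : ∀ u ∈ Set.Ioo p q, 0 < g u)
    (hf' : ∀ u ∈ Set.Ioo p q, deriv f u < 0) (hg' : ∀ u ∈ Set.Ioo p q, 0 < deriv g u)
    (L : ℝ → ℝ) (hLc : Continuous L)
    (hLd : ∀ u : ℝ, u ≠ -τ → DifferentiableAt ℝ L u)
    (hL : ∀ u : ℝ, u ≠ -τ → (1 + u / τ) * deriv L u + f u * L u - g u = 0) :
    StrictMonoOn L (Set.Ioo p q) := by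
  have hfd : Differentiable ℝ f := hf.differentiable (by norm_num)
  have hgd : Differentiable ℝ g := hg.differentiable (by norm_num)
  refine strictMonoOn_of_singular_ode (k := fun u ↦ τ * f u) (φ := g / f)
    (φ' := fun u ↦ (deriv g u * f u - g u * deriv f u) / f u ^ 2) hpq hLc.continuousOn
    (continuous_const.mul hfd.continuous).continuousOn (fun u hu ↦ mul_pos hτ (hfpos u hu))
    (fun u hu ↦ (hgd u).hasDerivAt.div (hfd u).hasDerivAt (hfpos u hu).ne')
    (fun u hu ↦ ?_) (fun u hu hu_ne ↦ (hLd u hu_ne).hasDerivAt.congr_deriv ?_)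
  · exact div_pos (by linarith [mul_pos (hg' u hu) (hfpos u hu),
      mul_neg_of_pos_of_neg (hgpos u hu) (hf' u hu)]) (pow_pos (hfpos u hu) 2)
  · have hu_τ : u - -τ ≠ 0 := sub_ne_zero.2 hu_ne
    have hf_ne := (hfpos u hu).ne'
    have hτ_ne := hτ.ne'
    have h := hL u hu_ne
    rw [Pi.div_apply, eq_div_iff hu_τ]
    field_simp at h ⊢
    linear_combination h
end

section
/- Let τ > 0 and let f, g : ℝ → ℝ be C^∞ such that for all u < 0: f(u) > 0, g(u) > 0, and for all n ≥ 1, f^(n)(u) < 0 and g^(n)(u) > 0. Then the unique continuous solution L of (1 + u/τ) L'(u) + f(u) L(u) − g(u) = 0 satisfies L^(n)(u) > 0 for all n ≥ 0 and all u < 0; equivalently, u ↦ L(−u) is completely monotone on (0,∞). -/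
open Real Filter Set Topology

lemma aux_pos (τ : ℝ) (hτ : 0 < τ) (F G h h' : ℝ → ℝ)
    (hFpos : ∀ u : ℝ, u < 0 → 0 < F u) (hGpos : ∀ u : ℝ, u < 0 → 0 < G u)
    (hder : ∀ u : ℝ, u < 0 → HasDerivAt h (h' u) u)
    (hode : ∀ u : ℝ, u < 0 → (1 + u / τ) * h' u + F u * h u - G u = 0) :
    ∀ u : ℝ, u < 0 → 0 < h u := by
  have hτ0 : τ ≠ 0 := ne_of_gt hτ
  have hmτ : (-τ) < 0 := neg_lt_zero.mpr hτ
  have hτval : 0 < h (-τ) := by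
    have h0 := hode (-τ) hmτ
    have hz : (1 + (-τ) / τ) = 0 := by field_simp; norm_num
    rw [hz, zero_mul] at h0
    have hF := hFpos _ hmτ
    have hG := hGpos _ hmτ
    by_contra hc
    push_neg at hc
    have := mul_nonpos_of_nonneg_of_nonpos hF.le hc
    linarith
  intro u hu
  rcases lt_trichotomy u (-τ) with hlt | heq | hgt
  · -- u < -τ
    by_contra hc
    push_neg at hc
    set S : Set ℝ := Set.Icc u (-τ) ∩ h ⁻¹' Set.Iic 0 with hSdef
    have hcont : ContinuousOn h (Set.Icc u (-τ)) := fun x hx =>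
      ((hder x (lt_of_le_of_lt hx.2 hmτ)).differentiableAt.continuousAt).continuousWithinAt
    have hScl : IsClosed S := hcont.preimage_isClosed_of_isClosed isClosed_Icc isClosed_Iic
    have hne : u ∈ S := ⟨⟨le_refl u, hlt.le⟩, hc⟩
    have hbdd : BddAbove S := ⟨-τ, fun x hx => hx.1.2⟩
    set s := sSup S with hs
    have hsS : s ∈ S := hScl.csSup_mem ⟨u, hne⟩ hbdd
    have hs_ge : u ≤ s := le_csSup hbdd hne
    have hs_le : s ≤ -τ := hsS.1.2
    have hs_ne : s ≠ -τ := by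
      intro e
      have := hsS.2
      rw [e] at this
      simp only [Set.mem_preimage, Set.mem_Iic] at this
      linarith
    have hs_lt : s < -τ := lt_of_le_of_ne hs_le hs_ne
    have hs_lt0 : s < 0 := lt_trans hs_lt hmτ
    have hpos_after : ∀ x ∈ Set.Ioc s (-τ), 0 < h x := by
      intro x hx
      by_contra hcx
      push_neg at hcx
      have hxS : x ∈ S := ⟨⟨le_trans hs_ge hx.1.le, hx.2⟩, hcx⟩
      exact absurd (le_csSup hbdd hxS) (not_le.mpr hx.1)
    have hslope : Tendsto (slope h s) (𝓝[>] s) (𝓝 (h' s)) :=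
      (hasDerivAt_iff_tendsto_slope.mp (hder s hs_lt0)).mono_left
        (nhdsWithin_mono s fun x hx => ne_of_gt hx)
    have hev : ∀ᶠ x in 𝓝[>] s, 0 ≤ slope h s x := by
      filter_upwards [Ioo_mem_nhdsGT hs_lt] with x hx
      have hx1 : 0 < h x := hpos_after x ⟨hx.1, hx.2.le⟩
      rw [slope_def_field]
      have hhs : h s ≤ 0 := hsS.2
      have hnum : 0 < h x - h s := by linarith
      have hden : 0 < x - s := by linarith [hx.1]
      exact le_of_lt (div_pos hnum hden)
    have hd_ge : 0 ≤ h' s := ge_of_tendsto hslope hev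
    have h0 := hode s hs_lt0
    have hcoef : 1 + s / τ < 0 := by
      have : s / τ < -1 := by
        rw [div_lt_iff₀ hτ]
        linarith
      linarith
    have hF := hFpos s hs_lt0
    have hG := hGpos s hs_lt0
    have h1 : (1 + s / τ) * h' s ≤ 0 := mul_nonpos_of_nonpos_of_nonneg hcoef.le hd_ge
    have h2 : F s * h s ≤ 0 := mul_nonpos_of_nonneg_of_nonpos hF.le hsS.2
    linarith
  · rw [heq]; exact hτval
  · -- -τ < u
    by_contra hc
    push_neg at hc
    set S : Set ℝ := Set.Icc (-τ) u ∩ h ⁻¹' Set.Iic 0 with hSdef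
    have hcont : ContinuousOn h (Set.Icc (-τ) u) := fun x hx =>
      ((hder x (lt_of_le_of_lt hx.2 hu)).differentiableAt.continuousAt).continuousWithinAt
    have hScl : IsClosed S := hcont.preimage_isClosed_of_isClosed isClosed_Icc isClosed_Iic
    have hne : u ∈ S := ⟨⟨hgt.le, le_refl u⟩, hc⟩
    have hbdd : BddBelow S := ⟨-τ, fun x hx => hx.1.1⟩
    set s := sInf S with hs
    have hsS : s ∈ S := hScl.csInf_mem ⟨u, hne⟩ hbdd
    have hs_le : s ≤ u := csInf_le hbdd hne
    have hs_ge : -τ ≤ s := hsS.1.1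
    have hs_ne : s ≠ -τ := by
      intro e
      have := hsS.2
      rw [e] at this
      simp only [Set.mem_preimage, Set.mem_Iic] at this
      linarith
    have hs_gt : -τ < s := lt_of_le_of_ne hs_ge (Ne.symm hs_ne)
    have hs_lt0 : s < 0 := lt_of_le_of_lt hs_le hu
    have hpos_before : ∀ x ∈ Set.Ico (-τ) s, 0 < h x := by
      intro x hx
      by_contra hcx
      push_neg at hcx
      have hxS : x ∈ S := ⟨⟨hx.1, le_trans hx.2.le hs_le⟩, hcx⟩
      exact absurd (csInf_le hbdd hxS) (not_le.mpr hx.2)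
    have hslope : Tendsto (slope h s) (𝓝[<] s) (𝓝 (h' s)) :=
      (hasDerivAt_iff_tendsto_slope.mp (hder s hs_lt0)).mono_left
        (nhdsWithin_mono s fun x hx => ne_of_lt hx)
    have hev : ∀ᶠ x in 𝓝[<] s, slope h s x ≤ 0 := by
      filter_upwards [Ioo_mem_nhdsLT hs_gt] with x hx
      have hx1 : 0 < h x := hpos_before x ⟨hx.1.le, hx.2⟩
      rw [slope_def_field]
      have hhs : h s ≤ 0 := hsS.2
      have hnum : 0 < h x - h s := by linarith
      have hden : x - s < 0 := by linarith [hx.2]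
      exact le_of_lt (div_neg_of_pos_of_neg hnum hden)
    have hd_le : h' s ≤ 0 := le_of_tendsto hslope hev
    have h0 := hode s hs_lt0
    have hcoef : 0 < 1 + s / τ := by
      have : -1 < s / τ := by
        rw [lt_div_iff₀ hτ]
        linarith
      linarith
    have hF := hFpos s hs_lt0
    have hG := hGpos s hs_lt0
    have h1 : (1 + s / τ) * h' s ≤ 0 := mul_nonpos_of_nonneg_of_nonpos hcoef.le hd_le
    have h2 : F s * h s ≤ 0 := mul_nonpos_of_nonneg_of_nonpos hF.le hsS.2
    linarith


noncomputable def stmtG (f g L : ℝ → ℝ) (n : ℕ) (u : ℝ) : ℝ :=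
  iteratedDeriv n g u -
    ∑ l ∈ Finset.range n,
      ((n.choose (l + 1) : ℝ) * (iteratedDeriv (l + 1) f u * iteratedDeriv (n - 1 - l) L u))

/-- Let `τ > 0` and `f, g` smooth such that for all `u < 0`: `f(u) > 0`, `g(u) > 0`, and for
all `n ≥ 1`, `f⁽ⁿ⁾(u) < 0` and `g⁽ⁿ⁾(u) > 0`. Then the unique continuous solution `L` of
`(1 + u/τ) L'(u) + f(u) L(u) − g(u) = 0` satisfies `L⁽ⁿ⁾(u) > 0` for all `n ≥ 0`, `u < 0`. -/
theorem stmt12 (τ : ℝ) (hτ : 0 < τ) (f g : ℝ → ℝ)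
    (hf : ContDiff ℝ (⊤ : ℕ∞) f) (hg : ContDiff ℝ (⊤ : ℕ∞) g)
    (hfpos : ∀ u : ℝ, u < 0 → 0 < f u) (hgpos : ∀ u : ℝ, u < 0 → 0 < g u)
    (hf' : ∀ n : ℕ, 1 ≤ n → ∀ u : ℝ, u < 0 → iteratedDeriv n f u < 0)
    (hg' : ∀ n : ℕ, 1 ≤ n → ∀ u : ℝ, u < 0 → 0 < iteratedDeriv n g u)
    (L : ℝ → ℝ) (hLc : Continuous L) (hLsmooth : ContDiffOn ℝ (⊤ : ℕ∞) L (Set.Iio 0))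
    (hLd : ∀ u : ℝ, u ≠ -τ → DifferentiableAt ℝ L u)
    (hL : ∀ u : ℝ, u ≠ -τ → (1 + u / τ) * deriv L u + f u * L u - g u = 0) :
    ∀ n : ℕ, ∀ u : ℝ, u < 0 → 0 < iteratedDeriv n L u := by
  have hτ0 : τ ≠ 0 := ne_of_gt hτ
  have hopen : IsOpen (Set.Iio (0:ℝ)) := isOpen_Iio
  have h1inf : (1 : WithTop ℕ∞) ≤ (⊤ : ℕ∞) := by exact_mod_cast le_top
  -- iterated derivatives of L are smooth on Iio 0
  have hLn : ∀ n : ℕ, ContDiffOn ℝ (⊤ : ℕ∞) (iteratedDeriv n L) (Set.Iio 0) := by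
    intro n
    induction n with
    | zero => simpa [iteratedDeriv_zero] using hLsmooth.of_le (by simp)
    | succ n ih =>
      rw [iteratedDeriv_succ]
      exact ih.deriv_of_isOpen hopen (by exact_mod_cast le_top)
  have hLder : ∀ n : ℕ, ∀ u : ℝ, u < 0 →
      HasDerivAt (iteratedDeriv n L) (iteratedDeriv (n + 1) L u) u := by
    intro n u hu
    have h1 : DifferentiableAt ℝ (iteratedDeriv n L) u :=
      ((hLn n).differentiableOn (by simp)).differentiableAt (hopen.mem_nhds hu)
    have := h1.hasDerivAt
    rwa [← iteratedDeriv_succ] at this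
  -- derivatives of f and g
  have hfC : ∀ k : ℕ, ContDiff ℝ (⊤ : ℕ∞) (iteratedDeriv k f) := by
    intro k; rw [iteratedDeriv_eq_iterate]; exact (hf.of_le (by simp)).iterate_deriv k
  have hgC : ∀ k : ℕ, ContDiff ℝ (⊤ : ℕ∞) (iteratedDeriv k g) := by
    intro k; rw [iteratedDeriv_eq_iterate]; exact (hg.of_le (by simp)).iterate_deriv k
  have hfd : ∀ k : ℕ, ∀ u : ℝ, HasDerivAt (iteratedDeriv k f) (iteratedDeriv (k + 1) f u) u := by
    intro k u
    have h1 : DifferentiableAt ℝ (iteratedDeriv k f) u :=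
      ((hfC k).differentiable (by simp)).differentiableAt
    have := h1.hasDerivAt
    rwa [← iteratedDeriv_succ] at this
  have hgd : ∀ k : ℕ, ∀ u : ℝ, HasDerivAt (iteratedDeriv k g) (iteratedDeriv (k + 1) g u) u := by
    intro k u
    have h1 : DifferentiableAt ℝ (iteratedDeriv k g) u :=
      ((hgC k).differentiable (by simp)).differentiableAt
    have := h1.hasDerivAt
    rwa [← iteratedDeriv_succ] at this
  -- the ODE for iterated derivatives
  have hode : ∀ n : ℕ, ∀ u : ℝ, u < 0 →
      (1 + u / τ) * iteratedDeriv (n + 1) L u + (f u + n / τ) * iteratedDeriv n L u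
        - stmtG f g L n u = 0 := by
    intro n
    induction n with
    | zero =>
      -- extend the given ODE to u = -τ by continuity
      set E : ℝ → ℝ := fun v => (1 + v / τ) * deriv L v + f v * L v - g v with hEdef
      have hE0 : ∀ v : ℝ, v ≠ -τ → E v = 0 := hL
      have hmτ : (-τ) < 0 := neg_lt_zero.mpr hτ
      have hEτ : E (-τ) = 0 := by
        have hd1 : ContinuousAt (deriv L) (-τ) := by
          have := ((hLn 1).continuousOn).continuousAt (hopen.mem_nhds hmτ)
          rwa [iteratedDeriv_one] at this
        have hEc : ContinuousAt E (-τ) := by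
          apply ContinuousAt.sub
          · apply ContinuousAt.add
            · exact (continuousAt_const.add (continuousAt_id.div_const τ)).mul hd1
            · exact hf.continuous.continuousAt.mul hLc.continuousAt
          · exact hg.continuous.continuousAt
        have t1 : Tendsto E (𝓝[≠] (-τ)) (𝓝 (E (-τ))) :=
          hEc.continuousWithinAt.tendsto
        have t2 : Tendsto E (𝓝[≠] (-τ)) (𝓝 0) := by
          apply Tendsto.congr' _ tendsto_const_nhds
          filter_upwards [self_mem_nhdsWithin] with v hv
          exact (hE0 v hv).symm
        exact tendsto_nhds_unique t1 t2
      intro u hu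
      have hEu : E u = 0 := by
        rcases eq_or_ne u (-τ) with h | h
        · rw [h]; exact hEτ
        · exact hE0 u h
      simp only [hEdef] at hEu
      simp [stmtG, iteratedDeriv_zero, iteratedDeriv_one]
      push_cast
      linarith
    | succ n ih =>
      intro u hu
      -- derivative of G n
      set T : ℕ → ℝ := fun l => iteratedDeriv (l + 1) f u * iteratedDeriv (n - l) L u with hT
      have hdG : HasDerivAt (stmtG f g L n)
          (iteratedDeriv (n + 1) g u -
            ∑ l ∈ Finset.range n,
              ((n.choose (l + 1) : ℝ) *
                (iteratedDeriv (l + 2) f u * iteratedDeriv (n - 1 - l) L u +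
                  iteratedDeriv (l + 1) f u * iteratedDeriv (n - l) L u))) u := by
        apply HasDerivAt.sub (hgd n u)
        apply HasDerivAt.fun_sum
        intro l hl
        have hln : l < n := Finset.mem_range.mp hl
        have hidx : n - 1 - l + 1 = n - l := by omega
        have := ((hfd (l + 1) u).mul (hLder (n - 1 - l) u hu)).const_mul
          ((n.choose (l + 1) : ℝ))
        rwa [hidx] at this
      -- derivative of the level-n identity function
      have hA : HasDerivAt (fun v : ℝ => 1 + v / τ) (1 / τ) u := by
        simpa using ((hasDerivAt_id u).div_const τ).const_add 1
      have hdf0 : HasDerivAt f (iteratedDeriv 1 f u) u := by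
        have := hfd 0 u
        rwa [iteratedDeriv_zero] at this
      have hB : HasDerivAt (fun v : ℝ => f v + n / τ) (iteratedDeriv 1 f u) u :=
        hdf0.add_const _
      have hFn : HasDerivAt
          (fun v => (1 + v / τ) * iteratedDeriv (n + 1) L v +
            (f v + n / τ) * iteratedDeriv n L v - stmtG f g L n v)
          ((1 / τ * iteratedDeriv (n + 1) L u +
              (1 + u / τ) * iteratedDeriv (n + 2) L u) +
            (iteratedDeriv 1 f u * iteratedDeriv n L u +
              (f u + n / τ) * iteratedDeriv (n + 1) L u) -
            (iteratedDeriv (n + 1) g u -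
              ∑ l ∈ Finset.range n,
                ((n.choose (l + 1) : ℝ) *
                  (iteratedDeriv (l + 2) f u * iteratedDeriv (n - 1 - l) L u +
                    iteratedDeriv (l + 1) f u * iteratedDeriv (n - l) L u)))) u :=
        ((hA.mul (hLder (n + 1) u hu)).add (hB.mul (hLder n u hu))).sub hdG
      have hFn0 : HasDerivAt
          (fun v => (1 + v / τ) * iteratedDeriv (n + 1) L v +
            (f v + n / τ) * iteratedDeriv n L v - stmtG f g L n v) 0 u := by
        have hev : (fun v => (1 + v / τ) * iteratedDeriv (n + 1) L v +
            (f v + n / τ) * iteratedDeriv n L v - stmtG f g L n v) =ᶠ[𝓝 u]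
            (fun _ => (0:ℝ)) := by
          filter_upwards [hopen.mem_nhds hu] with v hv
          exact ih v hv
        exact (hasDerivAt_const u (0:ℝ)).congr_of_eventuallyEq hev
      have huniq := hFn.unique hFn0
      -- combinatorial identity
      have key : ∑ l ∈ Finset.range (n + 1), (((n + 1).choose (l + 1) : ℝ)) * T l
          = ∑ l ∈ Finset.range n, ((n.choose (l + 1) : ℝ)) * T (l + 1) +
            ∑ l ∈ Finset.range n, ((n.choose (l + 1) : ℝ)) * T l + T 0 := by
        have e1 : ∀ l, (((n + 1).choose (l + 1) : ℝ)) * T l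
            = ((n.choose l : ℝ)) * T l + ((n.choose (l + 1) : ℝ)) * T l := by
          intro l
          rw [Nat.choose_succ_succ' n l]
          push_cast
          ring
        rw [Finset.sum_congr rfl fun l _ => e1 l, Finset.sum_add_distrib,
          Finset.sum_range_succ' (fun l => ((n.choose l : ℝ)) * T l) n,
          Finset.sum_range_succ (fun l => ((n.choose (l + 1) : ℝ)) * T l) n]
        simp [Nat.choose_succ_self]
        ring
      -- rewrite stmtG (n+1)
      have hGsucc : stmtG f g L (n + 1) u
          = iteratedDeriv (n + 1) g u -
            ∑ l ∈ Finset.range (n + 1), (((n + 1).choose (l + 1) : ℝ)) * T l := by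
        simp only [stmtG, hT]
        congr 1
      -- rewrite the sum in huniq
      have hsum : ∑ l ∈ Finset.range n,
          ((n.choose (l + 1) : ℝ) *
            (iteratedDeriv (l + 2) f u * iteratedDeriv (n - 1 - l) L u +
              iteratedDeriv (l + 1) f u * iteratedDeriv (n - l) L u))
          = ∑ l ∈ Finset.range n, ((n.choose (l + 1) : ℝ)) * (T (l + 1) + T l) := by
        apply Finset.sum_congr rfl
        intro l hl
        have hln : l < n := Finset.mem_range.mp hl
        have h1 : n - 1 - l = n - (l + 1) := by omega
        simp only [hT, h1]
      have hT0 : T 0 = iteratedDeriv 1 f u * iteratedDeriv n L u := by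
        simp [hT]
      rw [hsum] at huniq
      have hn2 : n + 1 + 1 = n + 2 := rfl
      rw [hn2, hGsucc]
      have hexp : ∑ l ∈ Finset.range n, ((n.choose (l + 1) : ℝ)) * (T (l + 1) + T l)
          = ∑ l ∈ Finset.range n, ((n.choose (l + 1) : ℝ)) * T (l + 1) +
            ∑ l ∈ Finset.range n, ((n.choose (l + 1) : ℝ)) * T l := by
        rw [← Finset.sum_add_distrib]
        apply Finset.sum_congr rfl
        intro l _
        ring
      rw [hexp] at huniq
      rw [key, hT0]
      push_cast
      push_cast at huniq
      linear_combination huniq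
  -- positivity of G n
  have hGpos : ∀ n : ℕ, (∀ k : ℕ, k < n → ∀ u : ℝ, u < 0 → 0 < iteratedDeriv k L u) →
      ∀ u : ℝ, u < 0 → 0 < stmtG f g L n u := by
    intro n ihk u hu
    have hgn : 0 < iteratedDeriv n g u := by
      cases n with
      | zero => simpa [iteratedDeriv_zero] using hgpos u hu
      | succ m => exact hg' (m + 1) (by omega) u hu
    have hsum : ∑ l ∈ Finset.range n,
        ((n.choose (l + 1) : ℝ) *
          (iteratedDeriv (l + 1) f u * iteratedDeriv (n - 1 - l) L u)) ≤ 0 := by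
      apply Finset.sum_nonpos
      intro l hl
      have hln : l < n := Finset.mem_range.mp hl
      have hfneg : iteratedDeriv (l + 1) f u < 0 := hf' (l + 1) (by omega) u hu
      have hLpos : 0 < iteratedDeriv (n - 1 - l) L u := ihk (n - 1 - l) (by omega) u hu
      have h1 : iteratedDeriv (l + 1) f u * iteratedDeriv (n - 1 - l) L u ≤ 0 :=
        mul_nonpos_of_nonpos_of_nonneg hfneg.le hLpos.le
      exact mul_nonpos_of_nonneg_of_nonpos (Nat.cast_nonneg _) h1
    have : stmtG f g L n u = iteratedDeriv n g u - _ := rfl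
    rw [this]
    linarith
  -- main induction
  intro n
  induction n using Nat.strong_induction_on with
  | _ n ih =>
    apply aux_pos τ hτ (fun u => f u + n / τ) (stmtG f g L n)
      (iteratedDeriv n L) (iteratedDeriv (n + 1) L)
    · intro u hu
      have h1 := hfpos u hu
      have h2 : (0:ℝ) ≤ n / τ := by positivity
      linarith
    · exact hGpos n ih
    · exact hLder n
    · exact hode n
end

section
/- For x ≥ 0, the function h(c) = (K−1) / Σ_{n=0}^∞ c^n / ∏_{m=0}^n (x+c+m) (with K ≥ 2 an integer) satisfies h(c) ≤ (K−1) / Σ_{n=0}^{K−1} c^n/∏_{m=0}^n (x+c+m), and consequently h(c) < c for all sufficiently large c; hence any sequence c_{k+1} = h(c_k) with c_0 > 0 is bounded. -/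
/-!
Every term of the series is nonnegative, so truncating it after `K` terms only decreases the
denominator of `h`, and truncating after one term gives `h c ≤ (K - 1)(x + c)`. Each of the
first `K` terms is `c⁻¹ ∏_{m ≤ n} c / (x + c + m) ∼ c⁻¹`, so `c` times the truncated sum tends
to `K > K - 1`, whence `h c < c` for large `c`. An orbit of `h` therefore decreases while it is
above this threshold and is at most `(K - 1)(x + C)` right after a step from below it.
-/

open Filter Topology Finset

lemma div_tsum_le_div_sum {ι : Type*} {f : ι → ℝ} {a : ℝ} {s : Finset ι} (ha : 0 ≤ a)
    (hf : ∀ i, 0 ≤ f i) (hs : 0 < ∑ i ∈ s, f i) : a / ∑' i, f i ≤ a / ∑ i ∈ s, f i := by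
  by_cases hsum : Summable f
  · exact div_le_div_of_nonneg_left ha hs (hsum.sum_le_tsum s fun i _ => hf i)
  · rw [tsum_eq_zero_of_not_summable hsum, div_zero]
    positivity

lemma tendsto_div_const_add_atTop (a : ℝ) : Tendsto (fun c : ℝ => c / (a + c)) atTop (𝓝 1) := by
  have hinv : Tendsto (fun c : ℝ => a * c⁻¹ + 1) atTop (𝓝 1) := by
    simpa using (tendsto_inv_atTop_zero.const_mul a).add_const 1
  refine (inv_one (G := ℝ) ▸ hinv.inv₀ one_ne_zero).congr' ?_
  filter_upwards [eventually_gt_atTop 0] with c hc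
  field_simp

lemma forall_le_max_of_succ_le_or_le {u : ℕ → ℝ} {B : ℝ}
    (hstep : ∀ k, u (k + 1) ≤ u k ∨ u (k + 1) ≤ B) (k : ℕ) : u k ≤ max (u 0) B := by
  induction k with
  | zero => exact le_max_left _ _
  | succ k ih => exact (hstep k).elim (fun h => h.trans ih) fun h => h.trans (le_max_right _ _)

noncomputable def seriesTerm (x c : ℝ) (n : ℕ) : ℝ :=
  c ^ n / ∏ m ∈ range (n + 1), (x + c + m)

lemma mul_seriesTerm (x c : ℝ) (n : ℕ) :
    c * seriesTerm x c n = ∏ m ∈ range (n + 1), c / (x + c + m) := by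
  rw [prod_div_distrib, prod_const, card_range, seriesTerm, mul_div_assoc', ← pow_succ']

section SeriesTerm

variable {x c : ℝ}

lemma seriesTerm_nonneg (hx : 0 ≤ x) (hc : 0 ≤ c) (n : ℕ) : 0 ≤ seriesTerm x c n :=
  div_nonneg (pow_nonneg hc n) (prod_nonneg fun _ _ => by positivity)

lemma seriesTerm_pos (hx : 0 ≤ x) (hc : 0 < c) (n : ℕ) : 0 < seriesTerm x c n :=
  div_pos (pow_pos hc n) (prod_pos fun _ _ => by positivity)

lemma div_tsum_seriesTerm_le_mul {a : ℝ} (ha : 0 ≤ a) (hx : 0 ≤ x) (hc : 0 ≤ c) :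
    a / ∑' n, seriesTerm x c n ≤ a * (x + c) := by
  rcases (add_nonneg hx hc).eq_or_lt with hxc | hxc
  · -- `x + c = 0`: the factor `m = 0` of every denominator vanishes, and `_ / 0 = 0`.
    have hzero : ∀ n, seriesTerm x c n = 0 := fun n => by
      simp [seriesTerm, prod_range_succ', ← hxc]
    simp [tsum_congr hzero, ← hxc]
  · have hfirst : seriesTerm x c 0 = 1 / (x + c) := by simp [seriesTerm]
    calc a / ∑' n, seriesTerm x c n ≤ a / ∑ n ∈ range 1, seriesTerm x c n :=
          div_tsum_le_div_sum ha (seriesTerm_nonneg hx hc) (by simp [hfirst, hxc])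
      _ = a * (x + c) := by simp [hfirst]

end SeriesTerm

lemma tendsto_mul_sum_seriesTerm_atTop (x : ℝ) (K : ℕ) :
    Tendsto (fun c => c * ∑ n ∈ range K, seriesTerm x c n) atTop (𝓝 K) := by
  have hterm (n : ℕ) : Tendsto (fun c => c * seriesTerm x c n) atTop (𝓝 1) := by
    have hfactor (m : ℕ) : Tendsto (fun c => c / (x + c + m)) atTop (𝓝 1) :=
      (tendsto_div_const_add_atTop (x + m)).congr fun c => by ring_nf
    simpa only [mul_seriesTerm, prod_const_one] using
      tendsto_finsetProd (range (n + 1)) fun m _ => hfactor m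
  simpa [mul_sum] using tendsto_finsetSum (range K) fun n _ => hterm n

lemma eventually_div_sum_seriesTerm_lt (x : ℝ) {a : ℝ} (ha : 0 ≤ a) {K : ℕ} (haK : a < K) :
    ∀ᶠ c in atTop, a / ∑ n ∈ range K, seriesTerm x c n < c := by
  filter_upwards [(tendsto_mul_sum_seriesTerm_atTop x K).eventually_const_lt haK,
    eventually_gt_atTop 0] with c hlt hc
  have hsum : 0 < ∑ n ∈ range K, seriesTerm x c n := pos_of_mul_pos_right (ha.trans_lt hlt) hc.le
  rwa [div_lt_iff₀ hsum]

/-- For `x ≥ 0` and integer `K ≥ 2`, the function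
`h(c) = (K−1)/Σ_{n=0}^∞ c^n/∏_{m=0}^n (x+c+m)` satisfies the truncation bound
`h(c) ≤ (K−1)/Σ_{n=0}^{K−1} c^n/∏_{m=0}^n (x+c+m)`, hence `h(c) < c` for all sufficiently
large `c`, and any sequence `c_{k+1} = h(c_k)` with `c₀ > 0` is bounded. -/
theorem stmt15 (x : ℝ) (hx : 0 ≤ x) (K : ℕ) (hK : 2 ≤ K) :
    let h : ℝ → ℝ := fun c =>
      ((K : ℝ) - 1) / ∑' n : ℕ, c ^ n / ∏ m ∈ Finset.range (n + 1), (x + c + m)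
    (∀ c : ℝ, 0 < c →
      h c ≤ ((K : ℝ) - 1) /
        ∑ n ∈ Finset.range K, c ^ n / ∏ m ∈ Finset.range (n + 1), (x + c + m)) ∧
    (∃ C : ℝ, ∀ c : ℝ, C ≤ c → h c < c) ∧
    (∀ c₀ : ℝ, 0 < c₀ → ∀ seq : ℕ → ℝ, seq 0 = c₀ → (∀ k, seq (k + 1) = h (seq k)) →
      ∃ M : ℝ, ∀ k, seq k ≤ M) := by
  intro h
  have hK1 : (0 : ℝ) ≤ K - 1 := sub_nonneg.2 (by exact_mod_cast (by omega : 1 ≤ K))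
  have htrunc (c : ℝ) (hc : 0 < c) : h c ≤ (K - 1) / ∑ n ∈ range K, seriesTerm x c n :=
    div_tsum_le_div_sum hK1 (seriesTerm_nonneg hx hc.le)
      (sum_pos (fun n _ => seriesTerm_pos hx hc n) (nonempty_range_iff.2 (by omega)))
  obtain ⟨C, hC⟩ := ((eventually_div_sum_seriesTerm_lt x hK1 (by linarith)).and
    (eventually_gt_atTop 0)).exists_forall_of_atTop
  have hlt (c : ℝ) (hc : C ≤ c) : h c < c := (htrunc c (hC c hc).2).trans_lt (hC c hc).1
  refine ⟨htrunc, ⟨C, hlt⟩, fun c₀ hc₀ seq hseq₀ hseq => ?_⟩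
  have hnonneg (k : ℕ) : 0 ≤ seq k := by
    induction k with
    | zero => exact hseq₀ ▸ hc₀.le
    | succ k ih => exact hseq k ▸ div_nonneg hK1 (tsum_nonneg (seriesTerm_nonneg hx ih))
  refine ⟨_, forall_le_max_of_succ_le_or_le (B := (K - 1) * (x + C)) fun k => ?_⟩
  rw [hseq k]
  rcases le_or_gt C (seq k) with hk | hk
  · exact .inl (hlt _ hk).le
  · exact .inr ((div_tsum_seriesTerm_le_mul hK1 hx (hnonneg k)).trans (by gcongr))
end

section
/- Let τ > 0, b > 0, and r ∈ (0, b]. Define p(λ) = β τ e^(τ(λ−r)) |s−λ|^(τ s − 1) / |s−r|^(τ s) on [r, s] (and 0 elsewhere), where s > r and β > 0. Then p solves the stationary transport equation d/dλ[((s−λ)/τ) p(λ)] + λ p(λ) = 0 on (r, s), and ∫ e^(uλ) p(λ) dλ = β τ e^(su + (s−r)τ) γ(τ s, (s−r)(τ+u)) / ((s−r)(τ+u))^(τ s) for u > −τ. -/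
/-
Away from the reset, `((s - λ)/τ) p(λ)` is a constant multiple of `e^(τ(λ - r)) (s - λ)^(τs)`,
whose derivative is `-τλ e^(τ(λ - r)) (s - λ)^(τs - 1)`, i.e. `-λ p(λ)` after the same
normalisation. For the moment generating function, the substitution `x = s - λ` turns the
integrand into a multiple of `x^(τs - 1) e^(-(τ + u) x)` on `[0, s - r]`, and rescaling by
`τ + u` gives `γ`.
-/

open Real MeasureTheory

noncomputable def stationaryDensity (τ r s β l : ℝ) : ℝ :=
  if l ∈ Set.Icc r s then
    β * τ * exp (τ * (l - r)) * |s - l| ^ (τ * s - 1) / |s - r| ^ (τ * s) else 0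

lemma rpow_sub_one_mul_self {x : ℝ} (hx : x ≠ 0) (a : ℝ) : x ^ (a - 1) * x = x ^ a := by
  rw [← rpow_add_one hx, sub_add_cancel]

section StationaryDensity

variable {τ r s β l : ℝ}

lemma stationaryDensity_of_mem_Icc (hl : l ∈ Set.Icc r s) :
    stationaryDensity τ r s β l =
      β * τ * exp (τ * (l - r)) * (s - l) ^ (τ * s - 1) / (s - r) ^ (τ * s) := by
  rw [stationaryDensity, if_pos hl, abs_of_nonneg (sub_nonneg.2 hl.2),
    abs_of_nonneg (sub_nonneg.2 (hl.1.trans hl.2))]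

lemma sub_div_mul_stationaryDensity (hτ : τ ≠ 0) (hl : l ∈ Set.Ico r s) :
    (s - l) / τ * stationaryDensity τ r s β l =
      β / (s - r) ^ (τ * s) * (exp (τ * (l - r)) * (s - l) ^ (τ * s)) := by
  rw [stationaryDensity_of_mem_Icc (Set.Ico_subset_Icc_self hl),
    ← rpow_sub_one_mul_self (sub_pos.2 hl.2).ne' (τ * s)]
  field_simp

lemma hasDerivAt_exp_mul_rpow_sub (a : ℝ) (hl : l < s) :
    HasDerivAt (fun x => exp (τ * (x - r)) * (s - x) ^ a)
      (exp (τ * (l - r)) * (τ * (s - l) - a) * (s - l) ^ (a - 1)) l := by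
  have hsl : 0 < s - l := sub_pos.2 hl
  have hexp : HasDerivAt (fun x => exp (τ * (x - r))) (exp (τ * (l - r)) * (τ * 1)) l :=
    (((hasDerivAt_id l).sub_const r).const_mul τ).exp
  have hpow : HasDerivAt (fun x => (s - x) ^ a) ((0 - 1) * a * (s - l) ^ (a - 1)) l :=
    ((hasDerivAt_const l s).sub (hasDerivAt_id l)).rpow_const (Or.inl hsl.ne')
  refine (hexp.mul hpow).congr_deriv ?_
  rw [← rpow_sub_one_mul_self hsl.ne' a]
  ring

theorem deriv_sub_div_mul_stationaryDensity_add (hτ : τ ≠ 0) (hrs : r < s)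
    (hl : l ∈ Set.Ioo r s) :
    deriv (fun x => (s - x) / τ * stationaryDensity τ r s β x) l +
      l * stationaryDensity τ r s β l = 0 := by
  have hflux : (fun x => (s - x) / τ * stationaryDensity τ r s β x) =ᶠ[nhds l]
      fun x => β / (s - r) ^ (τ * s) * (exp (τ * (x - r)) * (s - x) ^ (τ * s)) := by
    filter_upwards [isOpen_Ioo.mem_nhds hl] with x hx
    exact sub_div_mul_stationaryDensity hτ (Set.Ioo_subset_Ico_self hx)
  have hsr : (s - r) ^ (τ * s) ≠ 0 := (rpow_pos_of_pos (sub_pos.2 hrs) _).ne'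
  rw [hflux.deriv_eq, ((hasDerivAt_exp_mul_rpow_sub (τ * s) hl.2).const_mul _).deriv,
    stationaryDensity_of_mem_Icc (Set.Ioo_subset_Icc_self hl)]
  field_simp
  ring

end StationaryDensity

lemma integral_rpow_sub_one_mul_exp_neg_mul {a c L : ℝ} (hc : 0 < c) (hL : 0 ≤ L) :
    ∫ x in (0:ℝ)..L, x ^ (a - 1) * exp (-(c * x)) = lowerGamma a (c * L) / c ^ a := by
  have hscale :
      lowerGamma a (c * L) = c * ∫ x in (0:ℝ)..L, (c * x) ^ (a - 1) * exp (-(c * x)) := by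
    rw [intervalIntegral.integral_comp_mul_left (fun t => t ^ (a - 1) * exp (-t)) hc.ne',
      smul_eq_mul, mul_zero, mul_inv_cancel_left₀ hc.ne', lowerGamma]
  have hsplit : Set.EqOn (fun x => (c * x) ^ (a - 1) * exp (-(c * x)))
      (fun x => c ^ (a - 1) * (x ^ (a - 1) * exp (-(c * x)))) (Set.uIcc 0 L) := by
    intro x hx
    rw [Set.uIcc_of_le hL] at hx
    simp only [mul_rpow hc.le hx.1, mul_assoc]
  rw [hscale, intervalIntegral.integral_congr hsplit, intervalIntegral.integral_const_mul,
    ← mul_assoc, mul_comm c, rpow_sub_one_mul_self hc.ne',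
    mul_div_cancel_left₀ _ (rpow_pos_of_pos hc a).ne']

theorem integral_exp_mul_stationaryDensity {τ r s β u : ℝ} (hrs : r ≤ s) (hu : 0 < τ + u) :
    ∫ l, exp (u * l) * stationaryDensity τ r s β l =
      β * τ * exp (s * u + (s - r) * τ) * lowerGamma (τ * s) ((s - r) * (τ + u)) /
        ((s - r) * (τ + u)) ^ (τ * s) := by
  set C := β * τ * exp (s * u + (s - r) * τ) / (s - r) ^ (τ * s)
  set G := fun l => exp (u * l) *
    (β * τ * exp (τ * (l - r)) * (s - l) ^ (τ * s - 1) / (s - r) ^ (τ * s))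
  have hrestrict :
      (fun l => exp (u * l) * stationaryDensity τ r s β l) = (Set.Icc r s).indicator G := by
    ext l
    by_cases hl : l ∈ Set.Icc r s
    · rw [Set.indicator_of_mem hl, stationaryDensity_of_mem_Icc hl]
    · rw [Set.indicator_of_notMem hl, stationaryDensity, if_neg hl, mul_zero]
  have hreflect : Set.EqOn (fun x => G (s - x))
      (fun x => C * (x ^ (τ * s - 1) * exp (-((τ + u) * x)))) (Set.uIcc 0 (s - r)) := by
    intro x _
    have hexp : exp (u * (s - x)) * exp (τ * (s - x - r)) =
        exp (s * u + (s - r) * τ) * exp (-((τ + u) * x)) := by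
      rw [← exp_add, ← exp_add]
      ring_nf
    simp only [G, C, sub_sub_cancel]
    linear_combination β * τ * x ^ (τ * s - 1) / (s - r) ^ (τ * s) * hexp
  calc ∫ l, exp (u * l) * stationaryDensity τ r s β l
      = ∫ l in r..s, G l := by
        rw [hrestrict, integral_indicator measurableSet_Icc, integral_Icc_eq_integral_Ioc,
          intervalIntegral.integral_of_le hrs]
    _ = ∫ x in (0:ℝ)..(s - r), G (s - x) := by
        rw [intervalIntegral.integral_comp_sub_left G s, sub_sub_cancel, sub_zero]
    _ = C * (lowerGamma (τ * s) ((τ + u) * (s - r)) / (τ + u) ^ (τ * s)) := by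
        rw [intervalIntegral.integral_congr hreflect, intervalIntegral.integral_const_mul,
          integral_rpow_sub_one_mul_exp_neg_mul hu (sub_nonneg.2 hrs)]
    _ = _ := by
        rw [mul_rpow (sub_nonneg.2 hrs) hu.le, mul_comm (τ + u)]
        ring

theorem stmt16_general (τ r s β : ℝ) (hτ : 0 < τ) (hrs : r < s) :
    let p : ℝ → ℝ := fun l => if l ∈ Set.Icc r s then
      β * τ * Real.exp (τ * (l - r)) * |s - l| ^ (τ * s - 1) / |s - r| ^ (τ * s) else 0
    (∀ l ∈ Set.Ioo r s, deriv (fun l' => (s - l') / τ * p l') l + l * p l = 0) ∧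
    (∀ u : ℝ, -τ < u →
      ∫ l : ℝ, Real.exp (u * l) * p l =
        β * τ * Real.exp (s * u + (s - r) * τ) * lowerGamma (τ * s) ((s - r) * (τ + u)) /
          ((s - r) * (τ + u)) ^ (τ * s)) :=
  ⟨fun _ hl => deriv_sub_div_mul_stationaryDensity_add hτ.ne' hrs hl,
    fun _ hu => integral_exp_mul_stationaryDensity hrs.le (by linarith)⟩

/-- The thermodynamic mean-field stationary density
`p(λ) = β τ e^(τ(λ−r)) |s−λ|^(τs−1)/|s−r|^(τs)` on `[r,s]` solves
`d/dλ[((s−λ)/τ)p(λ)] + λ p(λ) = 0` on `(r,s)`, and its MGF is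
`∫ e^(uλ) p(λ) dλ = β τ e^(su+(s−r)τ) γ(τs,(s−r)(τ+u))/((s−r)(τ+u))^(τs)` for `u > −τ`. -/
theorem stmt16 (τ b r s β : ℝ) (hτ : 0 < τ) (hb : 0 < b) (hr : 0 < r) (hrb : r ≤ b)
    (hrs : r < s) (hβ : 0 < β) :
    let p : ℝ → ℝ := fun l => if l ∈ Set.Icc r s then
      β * τ * Real.exp (τ * (l - r)) * |s - l| ^ (τ * s - 1) / |s - r| ^ (τ * s) else 0
    (∀ l ∈ Set.Ioo r s, deriv (fun l' => (s - l') / τ * p l') l + l * p l = 0) ∧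
    (∀ u : ℝ, -τ < u →
      ∫ l : ℝ, Real.exp (u * l) * p l =
        β * τ * Real.exp (s * u + (s - r) * τ) * lowerGamma (τ * s) ((s - r) * (τ + u)) /
          ((s - r) * (τ + u)) ^ (τ * s)) :=
  stmt16_general τ r s β hτ hrs
end

section
/- Let τ > 0, b > 0, r ∈ (0,b], K ≥ 2, and fix μ_j > 0 for j = 1,…,K−1. Define F(β₁,…,β_{K−1}) = (∫₀^τ exp(−h̃(v) − Σ_j β_j h̃_j(v)) · e^(−rv)/(1−v/τ) dv)^(−1), where h̃_j(v) = ∫₀^v (1−e^(−μ_j u))/(1−u/τ) du and h̃(v) = (b/τ)∫₀^v u/(1−u/τ) du. Then as β_j → ∞ jointly (β_j = β t_j with fixed t_j > 0, β → ∞), F satisfies F ~ sqrt((2/π) Σ_j μ_j β_j). -/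
/-!
With `β = B t`, the reciprocal of `F` is the Laplace integral `∫₀^τ exp (-B g v) w v dv`, where
`g = Σ t_j h̃_j` and `w v = e^{-h̃ v} e^{-r v} / (1 - v/τ) = e^{(b-r) v} (1 - v/τ)^{bτ-1}` is
integrable because `bτ > 0`. The function `g` is increasing and, by l'Hôpital, `g v ~ a v²` at `0`
with `a = (Σ t_j μ_j) / 2`; moreover `w 0 = 1`. On a short interval `[0, δ]` the integrand lies
between the Gaussians `(1 ∓ ε) exp (-B (a ± ε) v²)`, whose integrals are `√(π / (B (a ± ε))) / 2`
up to exponentially small errors, and on `[δ, τ]` it is at most `exp (-B g δ) w`.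
Hence `√B ∫₀^τ exp (-B g) w → √(π / a) / 2`.
-/

open Real Filter MeasureTheory Set Topology intervalIntegral

lemma tendsto_sqrt_mul_integral_exp_neg_mul_sq {a δ : ℝ} (ha : 0 < a) (hδ : 0 < δ) :
    Tendsto (fun B : ℝ => √B * ∫ v in (0:ℝ)..δ, exp (-(B * a) * v ^ 2)) atTop
      (𝓝 (√(π / a) / 2)) := by
  have hlim : Tendsto (fun X => ∫ s in (0:ℝ)..X, exp (-a * s ^ 2)) atTop (𝓝 (√(π / a) / 2)) := by
    rw [← integral_gaussian_Ioi]
    exact intervalIntegral_tendsto_integral_Ioi 0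
      (integrable_exp_neg_mul_sq ha).integrableOn tendsto_id
  refine (hlim.comp (tendsto_sqrt_atTop.atTop_mul_const hδ)).congr' ?_
  filter_upwards [eventually_ge_atTop 0] with B hB
  have hsub := smul_integral_comp_mul_left (a := 0) (b := δ) (fun s => exp (-a * s ^ 2)) √B
  rw [mul_zero, smul_eq_mul] at hsub
  rw [Function.comp_apply, ← hsub]
  refine congrArg _ (integral_congr fun v _ => ?_)
  rw [mul_pow, sq_sqrt hB]
  ring_nf

lemma tendsto_sqrt_mul_exp_neg_mul {η : ℝ} (hη : 0 < η) :
    Tendsto (fun B : ℝ => √B * exp (-(B * η))) atTop (𝓝 0) := by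
  refine (tendsto_rpow_mul_exp_neg_mul_atTop_nhds_zero (1 / 2) η hη).congr' ?_
  filter_upwards [eventually_ge_atTop 0] with B hB
  rw [sqrt_eq_rpow, mul_comm B η, neg_mul]

lemma exists_sq_bounds_of_tendsto_nhdsGT {g w : ℝ → ℝ} {τ a w₀ ε : ℝ} (hτ : 0 < τ)
    (hg : Tendsto (fun v => g v / v ^ 2) (𝓝[>] 0) (𝓝 a)) (hw : Tendsto w (𝓝[>] 0) (𝓝 w₀))
    (hε : 0 < ε) :
    ∃ δ ∈ Ioo 0 τ, ∀ v ∈ Ioc 0 δ,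
      ((a - ε) * v ^ 2 ≤ g v ∧ g v ≤ (a + ε) * v ^ 2) ∧ (w₀ - ε ≤ w v ∧ w v ≤ w₀ + ε) := by
  have hev : ∀ᶠ v in 𝓝[>] 0,
      (g v / v ^ 2 ∈ Icc (a - ε) (a + ε) ∧ w v ∈ Icc (w₀ - ε) (w₀ + ε)) ∧ v < τ :=
    ((hg.eventually (Icc_mem_nhds (by linarith) (by linarith))).and
      (hw.eventually (Icc_mem_nhds (by linarith) (by linarith)))).and
      (nhdsWithin_le_nhds (Iio_mem_nhds hτ))
  obtain ⟨δ, hδ, hsub⟩ := mem_nhdsGT_iff_exists_Ioc_subset.1 hev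
  refine ⟨δ, ⟨hδ, (hsub ⟨hδ, le_rfl⟩).2⟩, fun v hv => ?_⟩
  obtain ⟨⟨⟨hg₁, hg₂⟩, hwv⟩, -⟩ := hsub hv
  have hv2 : 0 < v ^ 2 := pow_pos hv.1 2
  exact ⟨⟨(le_div_iff₀ hv2).1 hg₁, (div_le_iff₀ hv2).1 hg₂⟩, hwv⟩

section Laplace

variable {g w : ℝ → ℝ} {τ a w₀ c : ℝ}

lemma eventually_lt_sqrt_mul_integral_exp_neg_mul (hτ : 0 < τ) (ha : 0 < a)
    (hg : Tendsto (fun v => g v / v ^ 2) (𝓝[>] 0) (𝓝 a)) (hw : Tendsto w (𝓝[>] 0) (𝓝 w₀))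
    (hw_nonneg : ∀ v ∈ Ioo 0 τ, 0 ≤ w v)
    (hint : ∀ B, 0 ≤ B → IntervalIntegrable (fun v => exp (-(B * g v)) * w v) volume 0 τ)
    (hc : c < w₀ * (√(π / a) / 2)) :
    ∀ᶠ B in atTop, c < √B * ∫ v in (0:ℝ)..τ, exp (-(B * g v)) * w v := by
  have hcont : ContinuousAt (fun ε : ℝ => (w₀ - ε) * (√(π / (a + ε)) / 2)) 0 := by
    fun_prop (disch := simp [ha.ne'])
  have hev : ∀ᶠ ε in 𝓝[>] 0, c < (w₀ - ε) * (√(π / (a + ε)) / 2) :=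
    nhdsWithin_le_nhds (hcont.eventually (lt_mem_nhds (by simpa using hc)))
  obtain ⟨ε, hεc, hε⟩ := (hev.and self_mem_nhdsWithin).exists
  obtain ⟨δ, ⟨hδ, hδτ⟩, hbound⟩ := exists_sq_bounds_of_tendsto_nhdsGT hτ hg hw hε
  have hgauss :=
    (tendsto_sqrt_mul_integral_exp_neg_mul_sq (by positivity : 0 < a + ε) hδ).const_mul (w₀ - ε)
  filter_upwards [hgauss.eventually (lt_mem_nhds hεc), eventually_ge_atTop 0] with B hB hB0
  have hI := hint B hB0
  have hI₁ := hI.mono_set (uIcc_subset_uIcc left_mem_uIcc (mem_uIcc_of_le hδ.le hδτ.le))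
  have hI₂ := hI.mono_set (uIcc_subset_uIcc (mem_uIcc_of_le hδ.le hδτ.le) right_mem_uIcc)
  have hhead : (w₀ - ε) * ∫ v in (0:ℝ)..δ, exp (-(B * (a + ε)) * v ^ 2)
      ≤ ∫ v in (0:ℝ)..δ, exp (-(B * g v)) * w v := by
    rw [← intervalIntegral.integral_const_mul]
    refine integral_mono_on_of_le_Ioo hδ.le (Continuous.intervalIntegrable (by fun_prop) _ _) hI₁
      fun v hv => ?_
    obtain ⟨⟨-, hgv⟩, ⟨hwv, -⟩⟩ := hbound v (Ioo_subset_Ioc_self hv)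
    have hexp : exp (-(B * (a + ε)) * v ^ 2) ≤ exp (-(B * g v)) :=
      exp_le_exp.2 (by nlinarith [mul_le_mul_of_nonneg_left hgv hB0])
    calc (w₀ - ε) * exp (-(B * (a + ε)) * v ^ 2)
        ≤ w v * exp (-(B * (a + ε)) * v ^ 2) := mul_le_mul_of_nonneg_right hwv (exp_pos _).le
      _ ≤ w v * exp (-(B * g v)) :=
          mul_le_mul_of_nonneg_left hexp (hw_nonneg v ⟨hv.1, hv.2.trans hδτ⟩)
      _ = exp (-(B * g v)) * w v := mul_comm _ _
  have htail : 0 ≤ ∫ v in δ..τ, exp (-(B * g v)) * w v := by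
    simpa using integral_mono_on_of_le_Ioo hδτ.le intervalIntegrable_const hI₂ fun v hv =>
      mul_nonneg (exp_pos _).le (hw_nonneg v ⟨hδ.trans hv.1, hv.2⟩)
  rw [← integral_add_adjacent_intervals hI₁ hI₂]
  calc c < (w₀ - ε) * (√B * ∫ v in (0:ℝ)..δ, exp (-(B * (a + ε)) * v ^ 2)) := hB
    _ = √B * ((w₀ - ε) * ∫ v in (0:ℝ)..δ, exp (-(B * (a + ε)) * v ^ 2)) := by ring
    _ ≤ √B * ((∫ v in (0:ℝ)..δ, exp (-(B * g v)) * w v) + ∫ v in δ..τ, exp (-(B * g v)) * w v) :=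
        mul_le_mul_of_nonneg_left (by linarith) (sqrt_nonneg B)

lemma eventually_sqrt_mul_integral_exp_neg_mul_lt (hτ : 0 < τ) (ha : 0 < a)
    (hg : Tendsto (fun v => g v / v ^ 2) (𝓝[>] 0) (𝓝 a)) (hg_mono : MonotoneOn g (Ioo 0 τ))
    (hw : Tendsto w (𝓝[>] 0) (𝓝 w₀)) (hw_nonneg : ∀ v ∈ Ioo 0 τ, 0 ≤ w v)
    (hint : ∀ B, 0 ≤ B → IntervalIntegrable (fun v => exp (-(B * g v)) * w v) volume 0 τ)
    (hc : w₀ * (√(π / a) / 2) < c) :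
    ∀ᶠ B in atTop, √B * ∫ v in (0:ℝ)..τ, exp (-(B * g v)) * w v < c := by
  have hcont : ContinuousAt (fun ε : ℝ => (w₀ + ε) * (√(π / (a - ε)) / 2)) 0 := by
    fun_prop (disch := simp [ha.ne'])
  have hev : ∀ᶠ ε in 𝓝[>] 0, (w₀ + ε) * (√(π / (a - ε)) / 2) < c ∧ ε < a :=
    nhdsWithin_le_nhds ((hcont.eventually (gt_mem_nhds (by simpa using hc))).and
      (gt_mem_nhds ha))
  obtain ⟨ε, ⟨hεc, hεa⟩, hε⟩ := (hev.and self_mem_nhdsWithin).exists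
  obtain ⟨δ, ⟨hδ, hδτ⟩, hbound⟩ := exists_sq_bounds_of_tendsto_nhdsGT hτ hg hw hε
  have hgδ : 0 < g δ := lt_of_lt_of_le (by have := sub_pos.2 hεa; positivity)
    (hbound δ ⟨hδ, le_rfl⟩).1.1
  have hw_int : IntervalIntegrable w volume 0 τ := by simpa using hint 0 le_rfl
  set M := ∫ v in δ..τ, w v
  have hlim := ((tendsto_sqrt_mul_integral_exp_neg_mul_sq (sub_pos.2 hεa) hδ).const_mul
    (w₀ + ε)).add ((tendsto_sqrt_mul_exp_neg_mul hgδ).mul_const M)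
  rw [zero_mul, add_zero] at hlim
  filter_upwards [hlim.eventually (gt_mem_nhds hεc), eventually_ge_atTop 0] with B hB hB0
  have hI := hint B hB0
  have hδmem : δ ∈ uIcc 0 τ := mem_uIcc_of_le hδ.le hδτ.le
  have hI₁ := hI.mono_set (uIcc_subset_uIcc left_mem_uIcc hδmem)
  have hI₂ := hI.mono_set (uIcc_subset_uIcc hδmem right_mem_uIcc)
  have hhead : ∫ v in (0:ℝ)..δ, exp (-(B * g v)) * w v
      ≤ (w₀ + ε) * ∫ v in (0:ℝ)..δ, exp (-(B * (a - ε)) * v ^ 2) := by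
    rw [← intervalIntegral.integral_const_mul]
    refine integral_mono_on_of_le_Ioo hδ.le hI₁ (Continuous.intervalIntegrable (by fun_prop) _ _)
      fun v hv => ?_
    obtain ⟨⟨hgv, -⟩, ⟨-, hwv⟩⟩ := hbound v (Ioo_subset_Ioc_self hv)
    have hexp : exp (-(B * g v)) ≤ exp (-(B * (a - ε)) * v ^ 2) :=
      exp_le_exp.2 (by nlinarith [mul_le_mul_of_nonneg_left hgv hB0])
    calc exp (-(B * g v)) * w v ≤ exp (-(B * (a - ε)) * v ^ 2) * w v :=
          mul_le_mul_of_nonneg_right hexp (hw_nonneg v ⟨hv.1, hv.2.trans hδτ⟩)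
      _ ≤ exp (-(B * (a - ε)) * v ^ 2) * (w₀ + ε) :=
          mul_le_mul_of_nonneg_left hwv (exp_pos _).le
      _ = (w₀ + ε) * exp (-(B * (a - ε)) * v ^ 2) := mul_comm _ _
  have htail : ∫ v in δ..τ, exp (-(B * g v)) * w v ≤ exp (-(B * g δ)) * M := by
    rw [← intervalIntegral.integral_const_mul]
    refine integral_mono_on_of_le_Ioo hδτ.le hI₂
      ((hw_int.mono_set (uIcc_subset_uIcc hδmem right_mem_uIcc)).const_mul _) fun v hv => ?_
    have hgv : g δ ≤ g v := hg_mono ⟨hδ, hδτ⟩ ⟨hδ.trans hv.1, hv.2⟩ hv.1.le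
    have hexp : exp (-(B * g v)) ≤ exp (-(B * g δ)) :=
      exp_le_exp.2 (by nlinarith [mul_le_mul_of_nonneg_left hgv hB0])
    exact mul_le_mul_of_nonneg_right hexp (hw_nonneg v ⟨hδ.trans hv.1, hv.2⟩)
  rw [← integral_add_adjacent_intervals hI₁ hI₂]
  calc √B * ((∫ v in (0:ℝ)..δ, exp (-(B * g v)) * w v) + ∫ v in δ..τ, exp (-(B * g v)) * w v)
      ≤ √B * ((w₀ + ε) * (∫ v in (0:ℝ)..δ, exp (-(B * (a - ε)) * v ^ 2))
          + exp (-(B * g δ)) * M) :=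
        mul_le_mul_of_nonneg_left (by linarith) (sqrt_nonneg B)
    _ = (w₀ + ε) * (√B * ∫ v in (0:ℝ)..δ, exp (-(B * (a - ε)) * v ^ 2))
          + √B * exp (-(B * g δ)) * M := by ring
    _ < c := hB

lemma pos_of_monotoneOn_of_tendsto_div_sq (ha : 0 < a)
    (hg : Tendsto (fun v => g v / v ^ 2) (𝓝[>] 0) (𝓝 a)) (hg_mono : MonotoneOn g (Ioo 0 τ))
    {v : ℝ} (hv : v ∈ Ioo 0 τ) : 0 < g v := by
  obtain ⟨u, hgu, hu⟩ := ((hg.eventually (lt_mem_nhds ha)).and (Ioo_mem_nhdsGT hv.1)).exists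
  exact ((div_pos_iff_of_pos_right (pow_pos hu.1 2)).1 hgu).trans_le
    (hg_mono ⟨hu.1, hu.2.trans hv.2⟩ hv hu.2.le)

lemma intervalIntegrable_exp_neg_mul_mul (hτ : 0 ≤ τ) (hg_cont : ContinuousOn g (Ioo 0 τ))
    (hg_nonneg : ∀ v ∈ Ioo 0 τ, 0 ≤ g v) (hw_cont : ContinuousOn w (Ioo 0 τ))
    (hw_nonneg : ∀ v ∈ Ioo 0 τ, 0 ≤ w v) (hw_int : IntervalIntegrable w volume 0 τ) {B : ℝ}
    (hB : 0 ≤ B) : IntervalIntegrable (fun v => exp (-(B * g v)) * w v) volume 0 τ := by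
  refine hw_int.mono_fun ?_ ?_ <;> rw [uIoc_of_le hτ, ← Measure.restrict_congr_set Ioo_ae_eq_Ioc]
  · exact ((continuous_exp.comp_continuousOn (hg_cont.const_smul B).neg).mul hw_cont)
      |>.aestronglyMeasurable measurableSet_Ioo
  · refine (ae_restrict_iff' measurableSet_Ioo).2 (Eventually.of_forall fun v hv => ?_)
    simp only [norm_mul, norm_of_nonneg (exp_pos _).le, norm_of_nonneg (hw_nonneg v hv)]
    exact mul_le_of_le_one_left (hw_nonneg v hv)
      (exp_le_one_iff.2 (neg_nonpos.2 (mul_nonneg hB (hg_nonneg v hv))))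

theorem tendsto_sqrt_mul_integral_exp_neg_mul (hτ : 0 < τ) (ha : 0 < a)
    (hg_cont : ContinuousOn g (Ioo 0 τ)) (hg_mono : MonotoneOn g (Ioo 0 τ))
    (hg : Tendsto (fun v => g v / v ^ 2) (𝓝[>] 0) (𝓝 a))
    (hw_cont : ContinuousOn w (Ioo 0 τ)) (hw_nonneg : ∀ v ∈ Ioo 0 τ, 0 ≤ w v)
    (hw : Tendsto w (𝓝[>] 0) (𝓝 w₀)) (hw_int : IntervalIntegrable w volume 0 τ) :
    Tendsto (fun B => √B * ∫ v in (0:ℝ)..τ, exp (-(B * g v)) * w v) atTop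
      (𝓝 (w₀ * (√(π / a) / 2))) := by
  have hint := fun B (hB : 0 ≤ B) => intervalIntegrable_exp_neg_mul_mul hτ.le hg_cont
    (fun v hv => (pos_of_monotoneOn_of_tendsto_div_sq ha hg hg_mono hv).le) hw_cont hw_nonneg
    hw_int hB
  exact tendsto_order.2
    ⟨fun c hc => eventually_lt_sqrt_mul_integral_exp_neg_mul hτ ha hg hw hw_nonneg hint hc,
      fun c hc => eventually_sqrt_mul_integral_exp_neg_mul_lt hτ ha hg hg_mono hw hw_nonneg hint hc⟩

end Laplace

lemma tendsto_div_sq_nhdsGT_zero_of_hasDerivAt {g g' : ℝ → ℝ} {τ c : ℝ} (hτ : 0 < τ)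
    (hderiv : ∀ x ∈ Ico 0 τ, HasDerivAt g (g' x) x) (hg0 : g 0 = 0)
    (hg' : Tendsto (fun x => g' x / x) (𝓝[>] 0) (𝓝 c)) :
    Tendsto (fun x => g x / x ^ 2) (𝓝[>] 0) (𝓝 (c / 2)) := by
  refine HasDerivAt.lhopital_zero_right_on_Ioo (g' := fun x => 2 * x) hτ
    (fun x hx => hderiv x (Ioo_subset_Ico_self hx)) (fun x _ => by simpa using hasDerivAt_pow 2 x)
    (fun x hx => mul_ne_zero two_ne_zero hx.1.ne') ?_ ?_ ?_
  · simpa [hg0] using (hderiv 0 ⟨le_rfl, hτ⟩).continuousAt.tendsto.mono_left nhdsWithin_le_nhds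
  · simpa using ((continuous_pow 2).tendsto (0:ℝ)).mono_left nhdsWithin_le_nhds
  · exact (hg'.div_const 2).congr fun x => by ring

theorem tendsto_sqrt_mul_integral_exp_neg_mul_of_hasDerivAt {g g' w : ℝ → ℝ} {τ c w₀ : ℝ}
    (hτ : 0 < τ) (hc : 0 < c) (hderiv : ∀ x ∈ Ico 0 τ, HasDerivAt g (g' x) x) (hg0 : g 0 = 0)
    (hg'_nonneg : ∀ x ∈ Ioo 0 τ, 0 ≤ g' x) (hg' : Tendsto (fun x => g' x / x) (𝓝[>] 0) (𝓝 c))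
    (hw_cont : ContinuousOn w (Ioo 0 τ)) (hw_nonneg : ∀ v ∈ Ioo 0 τ, 0 ≤ w v)
    (hw : Tendsto w (𝓝[>] 0) (𝓝 w₀)) (hw_int : IntervalIntegrable w volume 0 τ) :
    Tendsto (fun B => √B * ∫ v in (0:ℝ)..τ, exp (-(B * g v)) * w v) atTop
      (𝓝 (w₀ * (√(π / (c / 2)) / 2))) := by
  have hderiv' : ∀ x ∈ Ioo 0 τ, HasDerivAt g (g' x) x :=
    fun x hx => hderiv x (Ioo_subset_Ico_self hx)
  have hg_cont : ContinuousOn g (Ioo 0 τ) :=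
    fun x hx => (hderiv' x hx).continuousAt.continuousWithinAt
  have hg_mono : MonotoneOn g (Ioo 0 τ) :=
    monotoneOn_of_hasDerivWithinAt_nonneg (convex_Ioo 0 τ) hg_cont
      (by simpa using fun x hx => (hderiv' x hx).hasDerivWithinAt) (by simpa using hg'_nonneg)
  exact tendsto_sqrt_mul_integral_exp_neg_mul hτ (half_pos hc) hg_cont hg_mono
    (tendsto_div_sq_nhdsGT_zero_of_hasDerivAt hτ hderiv hg0 hg') hw_cont hw_nonneg hw hw_int

lemma hasDerivAt_integral_of_continuousOn_Iio {f : ℝ → ℝ} {a τ x : ℝ}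
    (hf : ContinuousOn f (Iio τ)) (ha : a < τ) (hx : x < τ) :
    HasDerivAt (fun v => ∫ u in a..v, f u) (f x) x :=
  integral_hasDerivAt_right
    ((hf.mono fun _ hu => hu.2.trans_lt (max_lt ha hx)).intervalIntegrable)
    (hf.stronglyMeasurableAtFilter isOpen_Iio x hx) (hf.continuousAt (Iio_mem_nhds hx))

lemma one_sub_div_pos {τ u : ℝ} (hτ : 0 < τ) (hu : u < τ) : 0 < 1 - u / τ :=
  sub_pos.2 ((div_lt_one hτ).2 hu)

lemma intervalIntegrable_one_sub_div_rpow {τ p : ℝ} (hp : -1 < p) :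
    IntervalIntegrable (fun v => (1 - v / τ) ^ p) volume 0 τ := by
  have h := ((intervalIntegrable_rpow' hp (a := 1) (b := 0)).comp_sub_left 1).comp_mul_right
    (c := τ⁻¹)
  simpa [div_eq_mul_inv] using h

section RateTransfer

variable {τ μ : ℝ}

lemma continuousOn_one_sub_exp_div (hτ : 0 < τ) :
    ContinuousOn (fun u => (1 - exp (-μ * u)) / (1 - u / τ)) (Iio τ) :=
  ContinuousOn.div (by fun_prop) (by fun_prop) fun _ hu => (one_sub_div_pos hτ hu).ne'

lemma one_sub_exp_div_nonneg (hτ : 0 < τ) (hμ : 0 ≤ μ) {u : ℝ} (hu : u ∈ Ioo 0 τ) :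
    0 ≤ (1 - exp (-μ * u)) / (1 - u / τ) :=
  div_nonneg (sub_nonneg.2 (exp_le_one_iff.2 (by nlinarith [hu.1])))
    (one_sub_div_pos hτ hu.2).le

lemma tendsto_one_sub_exp_div_div :
    Tendsto (fun u => (1 - exp (-μ * u)) / (1 - u / τ) / u) (𝓝[>] 0) (𝓝 μ) := by
  have hderiv : HasDerivAt (fun u => 1 - exp (-μ * u)) μ 0 := by
    simpa using ((hasDerivAt_id (0:ℝ)).const_mul (-μ)).exp.const_sub 1
  have hslope := (hasDerivAt_iff_tendsto_slope_zero.1 hderiv).mono_left (nhdsGT_le_nhdsNE 0)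
  have hden : Tendsto (fun u => 1 - u / τ) (𝓝[>] 0) (𝓝 1) := by
    simpa using (Continuous.tendsto (f := fun u => 1 - u / τ) (by fun_prop) 0).mono_left
      nhdsWithin_le_nhds
  refine (by simpa using hslope.div hden one_ne_zero : Tendsto _ _ (𝓝 μ)).congr fun u => ?_
  rw [Pi.div_apply]
  ring_nf

end RateTransfer

lemma integral_id_div_one_sub_div {τ v : ℝ} (hτ : 0 < τ) (hv : v < τ) :
    ∫ u in (0:ℝ)..v, u / (1 - u / τ) = -(τ * v) - τ ^ 2 * log (1 - v / τ) := by
  have hsub : uIcc 0 v ⊆ Iio τ := fun _ hu => hu.2.trans_lt (max_lt hτ hv)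
  have hderiv : ∀ u ∈ uIcc 0 v,
      HasDerivAt (fun u => -(τ * u) - τ ^ 2 * log (1 - u / τ)) (u / (1 - u / τ)) u := by
    intro u hu
    have hd := one_sub_div_pos hτ (hsub hu)
    have hτu : τ - u ≠ 0 := (sub_pos.2 (hsub hu)).ne'
    have hlog := (((hasDerivAt_id' u).div_const τ).const_sub 1).log hd.ne'
    refine (((hasDerivAt_id' u).const_mul τ).fun_neg.fun_sub (hlog.const_mul (τ ^ 2))).congr_deriv
      ?_
    field_simp
    ring
  rw [integral_eq_sub_of_hasDerivAt hderiv
    ((ContinuousOn.div (by fun_prop) (by fun_prop) fun u hu => (one_sub_div_pos hτ hu).ne').mono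
      hsub |>.intervalIntegrable)]
  simp

lemma exp_neg_mul_integral_id_div_mul_exp_div {τ b r v : ℝ} (hτ : 0 < τ) (hv : v < τ) :
    exp (-((b / τ) * ∫ u in (0:ℝ)..v, u / (1 - u / τ))) * (exp (-r * v) / (1 - v / τ))
      = exp ((b - r) * v) * (1 - v / τ) ^ (b * τ - 1) := by
  have hd := one_sub_div_pos hτ hv
  rw [integral_id_div_one_sub_div hτ hv, rpow_def_of_pos hd, div_eq_mul_inv (exp _),
    ← exp_log (inv_pos.2 hd), log_inv, ← exp_add, ← exp_add, ← exp_add]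
  congr 1
  field_simp
  ring

section Weight

variable {τ b r : ℝ}

lemma continuousOn_exp_mul_one_sub_div_rpow (hτ : 0 < τ) :
    ContinuousOn (fun v => exp ((b - r) * v) * (1 - v / τ) ^ (b * τ - 1)) (Iio τ) :=
  ContinuousOn.mul (by fun_prop)
    (ContinuousOn.rpow_const (by fun_prop) fun _ hv => Or.inl (one_sub_div_pos hτ hv).ne')

lemma intervalIntegrable_exp_mul_one_sub_div_rpow (hτ : 0 < τ) (hb : 0 < b) :
    IntervalIntegrable (fun v => exp ((b - r) * v) * (1 - v / τ) ^ (b * τ - 1)) volume 0 τ :=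
  (intervalIntegrable_one_sub_div_rpow (by nlinarith)).continuousOn_mul
    (Continuous.continuousOn (by fun_prop))

end Weight

theorem tendsto_sqrt_mul_integral_rateTransfer {ι : Type*} [Fintype ι] {τ b r : ℝ} {μ t : ι → ℝ}
    (hτ : 0 < τ) (hb : 0 < b) (hμ : ∀ j, 0 ≤ μ j) (ht : ∀ j, 0 ≤ t j)
    (hc : 0 < ∑ j, t j * μ j) :
    Tendsto (fun B => √B * ∫ v in (0:ℝ)..τ,
        exp (-(B * ∑ j, t j * ∫ u in (0:ℝ)..v, (1 - exp (-μ j * u)) / (1 - u / τ))) *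
          (exp ((b - r) * v) * (1 - v / τ) ^ (b * τ - 1)))
      atTop (𝓝 (√(π / ((∑ j, t j * μ j) / 2)) / 2)) := by
  have hw_cont := continuousOn_exp_mul_one_sub_div_rpow (b := b) (r := r) hτ
  have hw : Tendsto (fun v => exp ((b - r) * v) * (1 - v / τ) ^ (b * τ - 1)) (𝓝[>] 0) (𝓝 1) := by
    simpa using ((hw_cont.continuousAt (Iio_mem_nhds hτ)).tendsto).mono_left nhdsWithin_le_nhds
  have hg' : Tendsto (fun x => (∑ j, t j * ((1 - exp (-μ j * x)) / (1 - x / τ))) / x) (𝓝[>] 0)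
      (𝓝 (∑ j, t j * μ j)) :=
    (tendsto_finsetSum _ fun j _ => (tendsto_one_sub_exp_div_div (τ := τ)).const_mul (t j)).congr
      fun x => by simp only [Finset.sum_div, mul_div_assoc]
  simpa only [one_mul] using tendsto_sqrt_mul_integral_exp_neg_mul_of_hasDerivAt hτ hc
    (fun x hx => HasDerivAt.fun_sum fun j _ =>
      (hasDerivAt_integral_of_continuousOn_Iio (continuousOn_one_sub_exp_div hτ) hτ hx.2).const_mul
        (t j))
    (by simp)
    (fun x hx => Finset.sum_nonneg fun j _ =>
      mul_nonneg (ht j) (one_sub_exp_div_nonneg hτ (hμ j) hx))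
    hg' (hw_cont.mono Ioo_subset_Iio_self)
    (fun v hv => mul_nonneg (exp_pos _).le (rpow_nonneg (one_sub_div_pos hτ hv.2).le _)) hw
    (intervalIntegrable_exp_mul_one_sub_div_rpow hτ hb)

lemma tendsto_inv_div_sqrt_of_tendsto_sqrt_mul {I : ℝ → ℝ} {c : ℝ} (hc : 0 < c)
    (h : Tendsto (fun B => √B * I B) atTop (𝓝 (√(π / (c / 2)) / 2))) :
    Tendsto (fun B => (I B)⁻¹ / √((2 / π) * (B * c))) atTop (𝓝 1) := by
  have hL : √(π / (c / 2)) / 2 * √((2 / π) * c) = 1 := by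
    rw [div_mul_eq_mul_div, ← sqrt_mul (by positivity),
      show π / (c / 2) * (2 / π * c) = 2 ^ 2 by field_simp, sqrt_sq zero_le_two]
    norm_num
  refine (by simpa [hL] using (h.mul_const √((2 / π) * c)).inv₀ (hL ▸ one_ne_zero)
    : Tendsto (fun B => (√B * I B * √((2 / π) * c))⁻¹) atTop (𝓝 1)).congr' ?_
  filter_upwards [eventually_ge_atTop 0] with B hB
  rw [show 2 / π * (B * c) = B * (2 / π * c) by ring, sqrt_mul hB]
  ring

theorem stmt17_general (τ b r : ℝ) (hτ : 0 < τ) (hb : 0 < b)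
    (K : ℕ) (hK : 2 ≤ K) (μ t : Fin (K - 1) → ℝ)
    (hμ : ∀ j, 0 < μ j) (ht : ∀ j, 0 < t j) :
    let htil : Fin (K - 1) → ℝ → ℝ := fun j v =>
      ∫ u in (0:ℝ)..v, (1 - Real.exp (-(μ j) * u)) / (1 - u / τ)
    let h0 : ℝ → ℝ := fun v => (b / τ) * ∫ u in (0:ℝ)..v, u / (1 - u / τ)
    let F : (Fin (K - 1) → ℝ) → ℝ := fun βv =>
      (∫ v in (0:ℝ)..τ,
        Real.exp (-(h0 v) - ∑ j, βv j * htil j v) * (Real.exp (-r * v) / (1 - v / τ)))⁻¹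
    Tendsto
      (fun B : ℝ =>
        F (fun j => B * t j) / Real.sqrt ((2 / Real.pi) * ∑ j, μ j * (B * t j)))
      atTop (nhds 1) := by
  intro htil h0 F
  have hc : 0 < ∑ j, t j * μ j :=
    Finset.sum_pos (fun j _ => mul_pos (ht j) (hμ j)) ⟨⟨0, by omega⟩, Finset.mem_univ _⟩
  refine (tendsto_inv_div_sqrt_of_tendsto_sqrt_mul hc (tendsto_sqrt_mul_integral_rateTransfer
    (r := r) hτ hb (fun j => (hμ j).le) (fun j => (ht j).le) hc)).congr fun B => ?_
  have hsum : ∑ j, μ j * (B * t j) = B * ∑ j, t j * μ j := by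
    rw [Finset.mul_sum]; exact Finset.sum_congr rfl fun j _ => by ring
  rw [hsum]
  -- the integrands differ only at `v = τ`, where `1 - v / τ = 0`
  refine congrArg (· / _) (congrArg _ (integral_congr_ae ((Measure.ae_ne volume τ).mono
    fun v hvτ hv => ?_)))
  rw [uIoc_of_le hτ.le] at hv
  rw [← exp_neg_mul_integral_id_div_mul_exp_div hτ (lt_of_le_of_ne hv.2 hvτ)]
  simp only [h0, htil, sub_eq_add_neg, exp_add, mul_assoc, ← Finset.mul_sum]
  ring

/-- Asymptotics of the RMF rate-transfer function: with
`F(β) = (∫₀^τ exp(−h̃(v) − Σ_j β_j h̃_j(v)) e^(−rv)/(1−v/τ) dv)⁻¹`, taking `β_j = B t_j`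
with fixed `t_j > 0`, one has `F ~ sqrt((2/π) Σ_j μ_j β_j)` as `B → ∞`. -/
theorem stmt17 (τ b r : ℝ) (hτ : 0 < τ) (hb : 0 < b) (hr0 : 0 < r) (hrb : r ≤ b)
    (K : ℕ) (hK : 2 ≤ K) (μ t : Fin (K - 1) → ℝ)
    (hμ : ∀ j, 0 < μ j) (ht : ∀ j, 0 < t j) :
    let htil : Fin (K - 1) → ℝ → ℝ := fun j v =>
      ∫ u in (0:ℝ)..v, (1 - Real.exp (-(μ j) * u)) / (1 - u / τ)
    let h0 : ℝ → ℝ := fun v => (b / τ) * ∫ u in (0:ℝ)..v, u / (1 - u / τ)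
    let F : (Fin (K - 1) → ℝ) → ℝ := fun βv =>
      (∫ v in (0:ℝ)..τ,
        Real.exp (-(h0 v) - ∑ j, βv j * htil j v) * (Real.exp (-r * v) / (1 - v / τ)))⁻¹
    Tendsto
      (fun B : ℝ =>
        F (fun j => B * t j) / Real.sqrt ((2 / Real.pi) * ∑ j, μ j * (B * t j)))
      atTop (nhds 1) :=
  stmt17_general τ b r hτ hb K hK μ t hμ ht
end

section
/- Let τ > 0. For the counting-synapse model (τ → ∞ limit), the functions in the RMF self-consistency equations reduce to l(x) = r x, h(x) = 0, and h_{j}(x) = (e^(μ_j x) − 1)/μ_j − x; i.e., lim_{τ→∞} τ r (e^(x/τ) − 1) = r x, lim_{τ→∞} b(τ(e^(x/τ)−1) − x) = 0, and lim_{τ→∞} [τ e^(−τμ)(Ei(τμ e^(x/τ)) − Ei(τμ)) − x] = (e^(μx) − 1)/μ − x for each fixed x ∈ ℝ and μ > 0. -/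
open Real Filter

/-- The exponential integral function, via its classical series representation
`Ei(y) = γ + ln|y| + Σ_{n≥1} yⁿ/(n·n!)` (which agrees with the principal-value integral
`Ei(y) = −p.v.∫_{−y}^∞ e^(−t)/t dt`). -/
noncomputable def Ei (y : ℝ) : ℝ :=
  Real.eulerMascheroniConstant + Real.log |y|
    + ∑' n : ℕ, y ^ (n + 1) / ((n + 1) * (n + 1).factorial)

open MeasureTheory intervalIntegral Set Topology
open scoped Interval

/-! Integrating `(eᵗ - 1)/t = ∑ tⁿ/(n+1)!` term by term gives
`Ei y = γ + log |y| + ∫₀^y (eᵗ - 1)/t dt`, so `Ei b - Ei a = ∫ₐᵇ eᵗ/t dt` for `a, b > 0`.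
Bounding `1/t` by its values at the endpoints squeezes `a e⁻ᵃ (Ei (a c) - Ei a)` between
`(e^{a(c-1)} - 1)/c` and `e^{a(c-1)} - 1`. For `a = τμ`, `c = e^{x/τ}` both bounds tend to
`e^{μx} - 1`, since `τ (e^{x/τ} - 1) → x`; this last limit also gives the first two claims. -/

lemma hasSum_pow_div_succ_factorial {t : ℝ} (ht : t ≠ 0) :
    HasSum (fun n : ℕ => t ^ n / (n + 1).factorial) ((exp t - 1) / t) := by
  have h := (hasSum_nat_add_iff' 1).mpr (NormedSpace.expSeries_div_hasSum_exp t)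
  simp only [Finset.sum_range_one, pow_zero, Nat.factorial_zero, Nat.cast_one, div_one,
    ← Real.exp_eq_exp_ℝ] at h
  simpa only [pow_succ, mul_div_right_comm, mul_div_cancel_right₀ _ ht] using h.div_const t

lemma summable_pow_div_succ_factorial (R : ℝ) :
    Summable (fun n : ℕ => R ^ n / (n + 1).factorial) := by
  rcases eq_or_ne R 0 with rfl | hR
  · exact summable_of_ne_finset_zero (s := {0}) fun n hn => by simp_all
  · exact (hasSum_pow_div_succ_factorial hR).summable

lemma abs_le_max_abs_abs_of_mem_uIcc {a b t : ℝ} (ht : t ∈ [[a, b]]) : |t| ≤ max |a| |b| := by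
  rcases mem_uIcc.mp ht with h | h
  · exact abs_le_max_abs_abs h.1 h.2
  · exact max_comm |a| |b| ▸ abs_le_max_abs_abs h.1 h.2

lemma hasSum_integral_exp_sub_one_div (a b : ℝ) :
    HasSum (fun n : ℕ => (b ^ (n + 1) - a ^ (n + 1)) / ((n + 1) * (n + 1).factorial))
      (∫ t in a..b, (exp t - 1) / t) := by
  have hterm (n : ℕ) : ∫ t in a..b, t ^ n / ((n + 1).factorial : ℝ)
      = (b ^ (n + 1) - a ^ (n + 1)) / ((n + 1) * (n + 1).factorial) := by
    rw [intervalIntegral.integral_div, integral_pow, div_div]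
  simp only [← hterm]
  refine hasSum_integral_of_dominated_convergence
    (fun n _ => max |a| |b| ^ n / (n + 1).factorial)
    (fun n => (by fun_prop : Continuous fun t : ℝ => t ^ n / ((n + 1).factorial : ℝ))
      |>.aestronglyMeasurable) (fun n => ae_of_all _ fun t ht => ?_)
    (ae_of_all _ fun _ _ => summable_pow_div_succ_factorial _) intervalIntegrable_const ?_
  · rw [norm_div, norm_pow, Real.norm_eq_abs, RCLike.norm_natCast]
    gcongr
    exact abs_le_max_abs_abs_of_mem_uIcc (uIoc_subset_uIcc ht)
  · filter_upwards [compl_mem_ae_iff.mpr (measure_singleton (0 : ℝ))] with t ht _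
    exact hasSum_pow_div_succ_factorial ht

lemma hasSum_Ei_series (y : ℝ) :
    HasSum (fun n : ℕ => y ^ (n + 1) / ((n + 1) * (n + 1).factorial))
      (∫ t in (0)..y, (exp t - 1) / t) := by
  simpa using hasSum_integral_exp_sub_one_div 0 y

lemma Ei_eq_integral (y : ℝ) :
    Ei y = eulerMascheroniConstant + log |y| + ∫ t in (0)..y, (exp t - 1) / t := by
  rw [Ei, (hasSum_Ei_series y).tsum_eq]

lemma Ei_sub_Ei (a b : ℝ) :
    Ei b - Ei a = log |b| - log |a| + ∫ t in a..b, (exp t - 1) / t := by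
  have h := ((hasSum_Ei_series b).sub (hasSum_Ei_series a)).unique
    (by simpa only [← sub_div] using hasSum_integral_exp_sub_one_div a b)
  rw [Ei_eq_integral, Ei_eq_integral, ← h]
  ring

lemma Ei_sub_Ei_of_pos {a b : ℝ} (ha : 0 < a) (hb : 0 < b) :
    Ei b - Ei a = ∫ t in a..b, exp t / t := by
  have hne : ∀ t ∈ [[a, b]], t ≠ 0 := fun t ht =>
    ne_of_mem_of_not_mem ht (notMem_uIcc_of_lt ha hb)
  have hint : IntervalIntegrable (fun t => (exp t - 1) / t) volume a b :=
    ((continuousOn_exp.sub continuousOn_const).div continuousOn_id hne).intervalIntegrable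
  have hinv : IntervalIntegrable (fun t => t⁻¹) volume a b :=
    (continuousOn_id.inv₀ hne).intervalIntegrable
  have hsplit : ∫ t in a..b, exp t / t = (∫ t in a..b, (exp t - 1) / t) + ∫ t in a..b, t⁻¹ := by
    rw [← integral_add hint hinv]
    refine integral_congr fun t ht => ?_
    field_simp [hne t ht]
    ring
  rw [Ei_sub_Ei, hsplit, integral_inv_of_pos ha hb, abs_of_pos ha, abs_of_pos hb,
    log_div hb.ne' ha.ne']
  ring

lemma integral_exp_div_bounds_of_le {a b : ℝ} (ha : 0 < a) (hab : a ≤ b) :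
    (exp b - exp a) / b ≤ ∫ t in a..b, exp t / t ∧
      ∫ t in a..b, exp t / t ≤ (exp b - exp a) / a := by
  have hint : IntervalIntegrable (fun t => exp t / t) volume a b :=
    (continuousOn_exp.div continuousOn_id fun t ht =>
      (ha.trans_le (uIcc_of_le hab ▸ ht).1).ne').intervalIntegrable
  have hexp (c : ℝ) : ∫ t in a..b, exp t / c = (exp b - exp a) / c := by
    rw [intervalIntegral.integral_div, integral_exp]
  constructor
  · rw [← hexp]
    refine integral_mono_on hab ((continuous_exp.div_const b).intervalIntegrable a b) hint
      fun t ht => ?_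
    have := ha.trans_le ht.1
    gcongr
    exact ht.2
  · rw [← hexp]
    refine integral_mono_on hab hint ((continuous_exp.div_const a).intervalIntegrable a b)
      fun t ht => ?_
    have := ha.trans_le ht.1
    gcongr
    exact ht.1

lemma integral_exp_div_bounds {a b : ℝ} (ha : 0 < a) (hb : 0 < b) :
    (exp b - exp a) / b ≤ ∫ t in a..b, exp t / t ∧
      ∫ t in a..b, exp t / t ≤ (exp b - exp a) / a := by
  rcases le_total a b with hab | hba
  · exact integral_exp_div_bounds_of_le ha hab
  · obtain ⟨hlo, hhi⟩ := integral_exp_div_bounds_of_le hb hba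
    have hflip (c : ℝ) : (exp b - exp a) / c = -((exp a - exp b) / c) := by ring
    rw [integral_symm, hflip a, hflip b]
    exact ⟨neg_le_neg hhi, neg_le_neg hlo⟩

lemma Ei_mul_sub_Ei_bounds {a c : ℝ} (ha : 0 < a) (hc : 0 < c) :
    (exp (a * (c - 1)) - 1) / c ≤ a * exp (-a) * (Ei (a * c) - Ei a) ∧
      a * exp (-a) * (Ei (a * c) - Ei a) ≤ exp (a * (c - 1)) - 1 := by
  have hac := mul_pos ha hc
  have hfac : 0 ≤ a * exp (-a) := by positivity
  have hsplit : exp (a * c) = exp a * exp (a * (c - 1)) := by rw [← exp_add]; ring_nf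
  obtain ⟨hlo, hhi⟩ := integral_exp_div_bounds ha hac
  have hlo_eq :
      a * exp (-a) * ((exp (a * c) - exp a) / (a * c)) = (exp (a * (c - 1)) - 1) / c := by
    rw [hsplit, exp_neg]
    field_simp
  have hhi_eq : a * exp (-a) * ((exp (a * c) - exp a) / a) = exp (a * (c - 1)) - 1 := by
    rw [hsplit, exp_neg]
    field_simp
  rw [Ei_sub_Ei_of_pos ha hac]
  exact ⟨hlo_eq ▸ mul_le_mul_of_nonneg_left hlo hfac,
    hhi_eq ▸ mul_le_mul_of_nonneg_left hhi hfac⟩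

lemma tendsto_mul_exp_div_sub_one (x : ℝ) :
    Tendsto (fun τ : ℝ => τ * (exp (x / τ) - 1)) atTop (𝓝 x) := by
  have hderiv : HasDerivAt (fun h => exp (x * h)) x 0 := by
    simpa [Function.comp_def] using
      (hasDerivAt_exp (x * 0)).comp 0 ((hasDerivAt_id 0).const_mul x)
  have hinv : Tendsto (fun τ : ℝ => τ⁻¹) atTop (𝓝[≠] 0) :=
    tendsto_inv_atTop_nhdsGT_zero.mono_right (nhdsGT_le_nhdsNE 0)
  refine ((hasDerivAt_iff_tendsto_slope_zero.mp hderiv).comp hinv).congr' ?_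
  filter_upwards [eventually_gt_atTop 0] with τ hτ
  simp [div_eq_mul_inv]

lemma tendsto_mul_exp_neg_mul_Ei_sub (x : ℝ) {μ : ℝ} (hμ : 0 < μ) :
    Tendsto (fun τ : ℝ => τ * exp (-τ * μ) * (Ei (τ * μ * exp (x / τ)) - Ei (τ * μ))) atTop
      (𝓝 ((exp (μ * x) - 1) / μ)) := by
  have hgrowth : Tendsto (fun τ : ℝ => exp (τ * μ * (exp (x / τ) - 1)) - 1) atTop
      (𝓝 (exp (μ * x) - 1)) := by
    refine (((continuous_exp.tendsto _).comp ((tendsto_mul_exp_div_sub_one x).const_mul μ))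
      |>.sub_const 1).congr fun τ => ?_
    rw [Function.comp_apply, ← mul_assoc, mul_comm μ τ]
  have hratio : Tendsto (fun τ : ℝ => exp (x / τ)) atTop (𝓝 1) := by
    simpa [Function.comp_def] using
      (continuous_exp.tendsto 0).comp (tendsto_const_nhds.div_atTop tendsto_id)
  have hlower := (hgrowth.div hratio one_ne_zero).div_const μ
  rw [div_one] at hlower
  have hscale (τ : ℝ) : τ * μ * exp (-(τ * μ)) * (Ei (τ * μ * exp (x / τ)) - Ei (τ * μ)) / μ
      = τ * exp (-τ * μ) * (Ei (τ * μ * exp (x / τ)) - Ei (τ * μ)) := by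
    rw [neg_mul]
    field_simp
  refine (tendsto_of_tendsto_of_tendsto_of_le_of_le' hlower (hgrowth.div_const μ) ?_ ?_).congr
    hscale <;>
  filter_upwards [eventually_gt_atTop 0] with τ hτ <;>
  obtain ⟨hlo, hhi⟩ := Ei_mul_sub_Ei_bounds (mul_pos hτ hμ) (exp_pos (x / τ))
  · exact div_le_div_of_nonneg_right hlo hμ.le
  · exact div_le_div_of_nonneg_right hhi hμ.le

/-- In the `τ → ∞` limit, the RMF self-consistency functions of the relaxing model reduce
to those of the counting-synapse model: `l(x) = r x`, `h(x) = 0`, and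
`h_j(x) = (e^(μx) − 1)/μ − x`. -/
theorem stmt18 (x r b μ : ℝ) (hμ : 0 < μ) :
    Tendsto (fun τ : ℝ => τ * r * (Real.exp (x / τ) - 1)) atTop (nhds (r * x)) ∧
    Tendsto (fun τ : ℝ => b * (τ * (Real.exp (x / τ) - 1) - x)) atTop (nhds 0) ∧
    Tendsto (fun τ : ℝ =>
        τ * Real.exp (-τ * μ) * (Ei (τ * μ * Real.exp (x / τ)) - Ei (τ * μ)) - x)
      atTop (nhds ((Real.exp (μ * x) - 1) / μ - x)) := by
  have hlin := tendsto_mul_exp_div_sub_one x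
  refine ⟨(hlin.const_mul r).congr fun τ => by ring, ?_,
    (tendsto_mul_exp_neg_mul_Ei_sub x hμ).sub_const x⟩
  simpa using (hlin.sub_const x).const_mul b
end
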